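/- arXiv:math/0506244 — 9 statements merged into one kernel-verified Lean document; each statement's English description precedes it below -/
import Mathlib

section
/- For every α ∈ ℂ, the 2×2 complex matrix M(α) with entries M₁₁ = (√(2π)/Γ(1/2 − iα))·exp(πα/2 + iπ/4), M₁₂ = −exp(πα + iπ/2), M₂₁ = exp(πα + iπ/2), M₂₂ = (√(2π)/Γ(1/2 + iα))·exp(πα/2 − iπ/4) satisfies det M(α) = M₁₁M₂₂ − M₁₂M₂₁ = 1. -/
open Complex

lemma gamma_inv_mul (α : ℂ) :
    1 / Complex.Gamma (1 / 2 - Complex.I * α) * (1 / Complex.Gamma (1 / 2 + Complex.I * α))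
      = Complex.sin ((Real.pi : ℂ) * (1 / 2 - Complex.I * α)) / (Real.pi : ℂ) := by
  have h := Complex.Gamma_mul_Gamma_one_sub (1 / 2 - Complex.I * α)
  have h2 : (1 : ℂ) - (1 / 2 - Complex.I * α) = 1 / 2 + Complex.I * α := by ring
  rw [h2] at h
  rw [div_mul_div_comm, one_mul, h, one_div, inv_div]

/-- The transition matrix `M(α)` relating the expansions of distributional solutions of
`(½(xD_x + D_x x) − α)u = 0` has determinant `M₁₁M₂₂ − M₁₂M₂₁ = 1` for every `α ∈ ℂ`. -/
theorem stmt_0 (α : ℂ) :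
    ((Real.sqrt (2 * Real.pi) : ℂ) / Complex.Gamma (1 / 2 - Complex.I * α)
        * Complex.exp ((Real.pi : ℂ) * α / 2 + Complex.I * Real.pi / 4))
      * ((Real.sqrt (2 * Real.pi) : ℂ) / Complex.Gamma (1 / 2 + Complex.I * α)
        * Complex.exp ((Real.pi : ℂ) * α / 2 - Complex.I * Real.pi / 4))
      - (-Complex.exp ((Real.pi : ℂ) * α + Complex.I * Real.pi / 2))
        * Complex.exp ((Real.pi : ℂ) * α + Complex.I * Real.pi / 2) = 1 := by
  have hsq : ((Real.sqrt (2 * Real.pi) : ℂ)) * ((Real.sqrt (2 * Real.pi) : ℂ)) = 2 * Real.pi := by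
    rw [← Complex.ofReal_mul, Real.mul_self_sqrt (by positivity)]
    push_cast; ring
  have hpi : (Real.pi : ℂ) ≠ 0 := Complex.ofReal_ne_zero.mpr Real.pi_ne_zero
  have key := gamma_inv_mul α
  have hsin : Complex.sin ((Real.pi : ℂ) * (1 / 2 - Complex.I * α))
      = (Complex.exp ((Real.pi : ℂ) * α) + Complex.exp (-((Real.pi : ℂ) * α))) / 2 := by
    rw [Complex.sin]
    rw [show ((Real.pi : ℂ) * (1 / 2 - Complex.I * α)) * Complex.I
        = Complex.I * ((Real.pi:ℂ)/2) - (Complex.I * Complex.I) * ((Real.pi:ℂ) * α) by ring,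
      Complex.I_mul_I]
    rw [show -((Real.pi : ℂ) * (1 / 2 - Complex.I * α)) * Complex.I
        = -(Complex.I * ((Real.pi:ℂ)/2)) + (Complex.I * Complex.I) * ((Real.pi:ℂ) * α) by ring,
      Complex.I_mul_I]
    rw [show Complex.I * ((Real.pi:ℂ)/2) - -1 * ((Real.pi:ℂ) * α)
        = (Real.pi:ℂ) * α + Complex.I * ((Real.pi:ℂ)/2) by ring,
      show -(Complex.I * ((Real.pi:ℂ)/2)) + -1 * ((Real.pi:ℂ) * α)
        = -((Real.pi:ℂ) * α) + -(Complex.I * ((Real.pi:ℂ)/2)) by ring]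
    rw [Complex.exp_add, Complex.exp_add, Complex.exp_neg (Complex.I * ((Real.pi:ℂ)/2))]
    have hI : Complex.exp (Complex.I * ((Real.pi:ℂ)/2)) = Complex.I := by
      rw [show Complex.I * ((Real.pi:ℂ)/2) = (Real.pi:ℂ)/2 * Complex.I by ring,
        Complex.exp_mul_I, Complex.cos_pi_div_two, Complex.sin_pi_div_two]
      ring
    rw [hI]
    field_simp
    linear_combination (-(Complex.exp ((Real.pi:ℂ) * α))) * Complex.I_sq
  calc ((Real.sqrt (2 * Real.pi) : ℂ) / Complex.Gamma (1 / 2 - Complex.I * α)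
        * Complex.exp ((Real.pi : ℂ) * α / 2 + Complex.I * Real.pi / 4))
      * ((Real.sqrt (2 * Real.pi) : ℂ) / Complex.Gamma (1 / 2 + Complex.I * α)
        * Complex.exp ((Real.pi : ℂ) * α / 2 - Complex.I * Real.pi / 4))
      - (-Complex.exp ((Real.pi : ℂ) * α + Complex.I * Real.pi / 2))
        * Complex.exp ((Real.pi : ℂ) * α + Complex.I * Real.pi / 2)
      = ((Real.sqrt (2 * Real.pi) : ℂ)) * ((Real.sqrt (2 * Real.pi) : ℂ))
          * (1 / Complex.Gamma (1 / 2 - Complex.I * α)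
            * (1 / Complex.Gamma (1 / 2 + Complex.I * α)))
          * (Complex.exp ((Real.pi : ℂ) * α / 2 + Complex.I * Real.pi / 4)
            * Complex.exp ((Real.pi : ℂ) * α / 2 - Complex.I * Real.pi / 4))
        + Complex.exp ((Real.pi : ℂ) * α + Complex.I * Real.pi / 2)
          * Complex.exp ((Real.pi : ℂ) * α + Complex.I * Real.pi / 2) := by ring
    _ = 1 := by
        rw [hsq, key, hsin, ← Complex.exp_add, ← Complex.exp_add]
        rw [show (Real.pi : ℂ) * α / 2 + Complex.I * Real.pi / 4
            + ((Real.pi : ℂ) * α / 2 - Complex.I * Real.pi / 4) = (Real.pi:ℂ) * α by ring]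
        rw [show (Real.pi : ℂ) * α + Complex.I * Real.pi / 2
            + ((Real.pi : ℂ) * α + Complex.I * Real.pi / 2)
            = 2 * ((Real.pi:ℂ) * α) + (Real.pi:ℂ) * Complex.I by ring]
        rw [Complex.exp_add, Complex.exp_pi_mul_I]
        rw [show (2:ℂ) * ((Real.pi:ℂ) * α) = (Real.pi:ℂ)*α + (Real.pi:ℂ)*α by ring,
          Complex.exp_add]
        field_simp
        rw [Complex.exp_neg]
        field_simp
        ring
end

section
/- For every R > 0 there exists c > 0 such that for all z ∈ ℂ with |Re z| ≤ R one has |cosh z| ≥ c · dist(z, Z) · exp(|Re z|), where Z = { iπ(k + 1/2) : k ∈ ℤ } is the zero set of cosh and dist(z, Z) = inf_{k ∈ ℤ} |z − iπ(k + 1/2)|. -/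
lemma abs_cosh_sq (x y : ℝ) :
    ‖Complex.cosh (x + y * Complex.I)‖ ^ 2 = Real.sinh x ^ 2 + Real.cos y ^ 2 := by
  have h : Complex.cosh (x + y * Complex.I)
      = (Real.cosh x * Real.cos y : ℝ) + (Real.sinh x * Real.sin y : ℝ) * Complex.I := by
    rw [Complex.cosh_add, Complex.cosh_mul_I, Complex.sinh_mul_I]
    push_cast [Complex.ofReal_cosh, Complex.ofReal_sinh, Complex.ofReal_cos, Complex.ofReal_sin]
    ring
  rw [h, Complex.sq_norm, Complex.normSq_add_mul_I]
  have h1 := Real.cosh_sq x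
  have h2 := Real.sin_sq_add_cos_sq y
  nlinarith [Real.sin_sq_add_cos_sq y]

lemma key (z : ℂ) : ∃ k : ℤ,
    2 / Real.pi * ‖z - Complex.I * (Real.pi : ℂ) * ((k : ℂ) + 1 / 2)‖
      ≤ ‖Complex.cosh z‖ := by
  set x := z.re
  set y := z.im
  set k : ℤ := round (y / Real.pi - 1 / 2) with hk
  refine ⟨k, ?_⟩
  set s : ℝ := y - Real.pi * (k + 1 / 2) with hs
  have hpi := Real.pi_pos
  have hsle : |s| ≤ Real.pi / 2 := by
    have h1 : |y / Real.pi - 1 / 2 - k| ≤ 1 / 2 := by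
      have := abs_sub_round (y / Real.pi - 1 / 2)
      linarith
    have h2 : s = Real.pi * (y / Real.pi - 1 / 2 - k) := by
      field_simp [hs]; ring
    rw [h2, abs_mul, abs_of_pos hpi]
    nlinarith
  -- |z - z_k|² = x² + s²
  have hsub : z - Complex.I * (Real.pi : ℂ) * ((k : ℂ) + 1 / 2) = (x : ℂ) + (s : ℂ) * Complex.I := by
    apply Complex.ext <;> simp [hs, x, y] <;> ring
  have habs2 : ‖z - Complex.I * (Real.pi : ℂ) * ((k : ℂ) + 1 / 2)‖ ^ 2 = x ^ 2 + s ^ 2 := by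
    rw [hsub, Complex.sq_norm, Complex.normSq_add_mul_I]
  -- |cos y| = |sin s|
  have hcos : Real.cos y ^ 2 = Real.sin s ^ 2 := by
    have : y = s + Real.pi * k + Real.pi / 2 := by rw [hs]; ring
    rw [this, ← Real.sin_pi_div_two_sub]
    have : Real.pi / 2 - (s + Real.pi * k + Real.pi / 2) = -s - Real.pi * k := by ring
    rw [this]
    rcases Int.even_or_odd k with ⟨m, hm⟩ | ⟨m, hm⟩
    · have : (-s - Real.pi * k) = -s - m * (2 * Real.pi) := by rw [hm]; push_cast; ring
      rw [this, Real.sin_sub_int_mul_two_pi, Real.sin_neg]; ring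
    · have : (-s - Real.pi * k) = (-s - Real.pi) - m * (2 * Real.pi) := by rw [hm]; push_cast; ring
      rw [this, Real.sin_sub_int_mul_two_pi, Real.sin_sub_pi, Real.sin_neg]; ring
  -- 2/π |s| ≤ |sin s|
  have hsin : 2 / Real.pi * |s| ≤ |Real.sin s| := by
    have h := Real.mul_le_sin (x := |s|) (abs_nonneg s) hsle
    refine h.trans ?_
    rcases le_or_gt 0 s with hs0 | hs0
    · rw [abs_of_nonneg hs0]; exact le_abs_self _
    · rw [abs_of_neg hs0, Real.sin_neg]; exact neg_le_abs _
  -- x ≤ |sinh x|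
  have hsinh : |x| ≤ |Real.sinh x| := by
    rcases le_or_gt 0 x with h | h
    · rw [_root_.abs_of_nonneg h, _root_.abs_of_nonneg (Real.sinh_nonneg_iff.2 h)]
      exact Real.self_le_sinh_iff.2 h
    · rw [_root_.abs_of_neg h, _root_.abs_of_neg (Real.sinh_neg_iff.2 h)]
      have := Real.self_le_sinh_iff.2 (le_of_lt (neg_pos.2 h))
      rw [Real.sinh_neg] at this; linarith
  have h2pi : 2 / Real.pi ≤ 1 := by
    rw [div_le_one hpi]; linarith [Real.two_le_pi]
  have hcosh : Complex.cosh z = Complex.cosh (x + y * Complex.I) := by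
    congr 1; exact (Complex.re_add_im z).symm
  -- square comparison
  have hsq : (2 / Real.pi * ‖z - Complex.I * (Real.pi : ℂ) * ((k : ℂ) + 1 / 2)‖) ^ 2
      ≤ ‖Complex.cosh z‖ ^ 2 := by
    rw [hcosh, abs_cosh_sq, mul_pow, habs2]
    have hq0 : (0:ℝ) ≤ 2 / Real.pi := div_nonneg (by norm_num) hpi.le
    have hq : (2 / Real.pi) ^ 2 ≤ 1 := by nlinarith
    have h1 : (2 / Real.pi) ^ 2 * x ^ 2 ≤ Real.sinh x ^ 2 := by
      have hx2 : x ^ 2 ≤ Real.sinh x ^ 2 := by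
        rw [← _root_.sq_abs x, ← _root_.sq_abs (Real.sinh x)]
        exact pow_le_pow_left₀ (abs_nonneg x) hsinh 2
      nlinarith [sq_nonneg x]
    have h2 : (2 / Real.pi) ^ 2 * s ^ 2 ≤ Real.cos y ^ 2 := by
      rw [hcos]
      have h := pow_le_pow_left₀ (mul_nonneg hq0 (abs_nonneg s)) hsin 2
      rw [mul_pow, _root_.sq_abs, _root_.sq_abs] at h
      exact h
    linarith
  have hnn : 0 ≤ 2 / Real.pi * ‖z - Complex.I * (Real.pi : ℂ) * ((k : ℂ) + 1 / 2)‖ :=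
    mul_nonneg (div_nonneg (by norm_num) hpi.le) (norm_nonneg _)
  have := Real.sqrt_le_sqrt hsq
  rwa [Real.sqrt_sq hnn, Real.sqrt_sq (norm_nonneg _)] at this

/-- For every `R > 0` there is `c > 0` such that for all `z ∈ ℂ` with `|Re z| ≤ R`,
`|cosh z| ≥ c · dist(z, Z) · e^{|Re z|}`, where `Z = {iπ(k + 1/2) : k ∈ ℤ}` is the zero
set of `cosh` and `dist(z, Z) = inf_{k ∈ ℤ} |z − iπ(k + 1/2)|`. -/
theorem stmt_4 (R : ℝ) (hR : 0 < R) :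
    ∃ c : ℝ, 0 < c ∧ ∀ z : ℂ, |z.re| ≤ R →
      c * (⨅ k : ℤ, ‖z - Complex.I * (Real.pi : ℂ) * ((k : ℂ) + 1 / 2)‖)
          * Real.exp |z.re|
        ≤ ‖Complex.cosh z‖ := by
  have hpi := Real.pi_pos
  refine ⟨2 / Real.pi * Real.exp (-R), by positivity, fun z hz => ?_⟩
  obtain ⟨k, hk⟩ := key z
  have hbdd : BddBelow (Set.range fun k : ℤ =>
      ‖z - Complex.I * (Real.pi : ℂ) * ((k : ℂ) + 1 / 2)‖) :=
    ⟨0, by rintro _ ⟨j, rfl⟩; exact norm_nonneg _⟩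
  have hinf : (⨅ k : ℤ, ‖z - Complex.I * (Real.pi : ℂ) * ((k : ℂ) + 1 / 2)‖)
      ≤ ‖z - Complex.I * (Real.pi : ℂ) * ((k : ℂ) + 1 / 2)‖ :=
    ciInf_le hbdd k
  have hinf0 : 0 ≤ ⨅ k : ℤ, ‖z - Complex.I * (Real.pi : ℂ) * ((k : ℂ) + 1 / 2)‖ :=
    le_ciInf fun j => norm_nonneg _
  have hexp : Real.exp |z.re| ≤ Real.exp R := Real.exp_le_exp.2 hz
  calc 2 / Real.pi * Real.exp (-R)
        * (⨅ k : ℤ, ‖z - Complex.I * (Real.pi : ℂ) * ((k : ℂ) + 1 / 2)‖)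
        * Real.exp |z.re|
      ≤ 2 / Real.pi * Real.exp (-R)
        * ‖z - Complex.I * (Real.pi : ℂ) * ((k : ℂ) + 1 / 2)‖ * Real.exp R := by
        apply mul_le_mul _ hexp (Real.exp_nonneg _)
        · positivity
        · exact mul_le_mul_of_nonneg_left hinf (by positivity)
    _ = 2 / Real.pi * ‖z - Complex.I * (Real.pi : ℂ) * ((k : ℂ) + 1 / 2)‖ := by
        rw [Real.exp_neg]
        field_simp
    _ ≤ ‖Complex.cosh z‖ := hk
end

section
/- For every R > 0 there exists C > 0 such that for all z ∈ ℂ with 0 < |Re z| ≤ R and cosh z ≠ 0 one has |tanh z − sgn(Re z)| ≤ C · exp(−2|Re z|) / dist(z, Z), where Z = { iπ(k + 1/2) : k ∈ ℤ }, dist(z, Z) = inf_{k ∈ ℤ} |z − iπ(k + 1/2)|, and sgn(Re z) = ±1 according to the sign of Re z. -/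
open Real Complex

set_option maxHeartbeats 1000000 in
/-- For every `R > 0` there is `C > 0` such that for all `z ∈ ℂ` with `0 < |Re z| ≤ R` and
`cosh z ≠ 0`, `|tanh z − sgn(Re z)| ≤ C e^{−2|Re z|} / dist(z, Z)`, where
`Z = {iπ(k + 1/2) : k ∈ ℤ}` and `dist(z, Z) = inf_{k ∈ ℤ} |z − iπ(k + 1/2)|`. -/
theorem stmt_5 (R : ℝ) (hR : 0 < R) :
    ∃ C : ℝ, 0 < C ∧ ∀ z : ℂ, 0 < |z.re| → |z.re| ≤ R → Complex.cosh z ≠ 0 →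
      ‖Complex.tanh z - (Real.sign z.re : ℂ)‖
        ≤ C * Real.exp (-2 * |z.re|) /
            (⨅ k : ℤ, ‖z - Complex.I * (Real.pi : ℂ) * ((k : ℂ) + 1 / 2)‖) := by
  have hπ := Real.pi_pos
  refine ⟨Real.pi / 2 * Real.exp R, by positivity, ?_⟩
  intro z hx hxR hc
  set x := z.re with hxdef
  set y := z.im with hydef
  set k : ℤ := round (y / Real.pi - 1/2) with hk
  set t : ℝ := y - Real.pi * (k + 1/2) with ht
  have hts : |t| ≤ Real.pi / 2 := by
    have h1 : |y / Real.pi - 1/2 - k| ≤ 1/2 := by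
      simpa [hk] using abs_sub_round (y / Real.pi - 1/2)
    have h2 : t = Real.pi * (y / Real.pi - 1/2 - k) := by
      field_simp [ht]; ring
    rw [h2, abs_mul, abs_of_pos hπ]
    nlinarith [abs_nonneg (y / Real.pi - 1/2 - k)]
  -- re/im of the shifted points
  have hre : ∀ m : ℤ, (z - Complex.I * (Real.pi : ℂ) * ((m : ℂ) + 1 / 2)).re = x := by
    intro m; simp [Complex.sub_re, Complex.mul_re, Complex.mul_im, hxdef]
  have habsk : ‖z - Complex.I * (Real.pi : ℂ) * ((k : ℂ) + 1 / 2)‖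
      = Real.sqrt (x^2 + t^2) := by
    have him : (z - Complex.I * (Real.pi : ℂ) * ((k : ℂ) + 1 / 2)).im = t := by
      simp [Complex.sub_im, Complex.mul_re, Complex.mul_im, ht, hydef]
    rw [Complex.norm_def, Complex.normSq_apply, hre k, him]
    ring_nf
  set D : ℝ := ⨅ m : ℤ, ‖z - Complex.I * (Real.pi : ℂ) * ((m : ℂ) + 1 / 2)‖ with hD
  have hbdd : BddBelow (Set.range fun m : ℤ =>
      ‖z - Complex.I * (Real.pi : ℂ) * ((m : ℂ) + 1 / 2)‖) := by
    refine ⟨0, ?_⟩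
    rintro _ ⟨m, rfl⟩
    exact norm_nonneg _
  have hDpos : 0 < D := by
    refine lt_of_lt_of_le hx (le_ciInf fun m => ?_)
    calc |x| = |(z - Complex.I * (Real.pi : ℂ) * ((m : ℂ) + 1 / 2)).re| := by rw [hre m]
      _ ≤ _ := Complex.abs_re_le_norm _
  have hDle : D ≤ Real.sqrt (x^2 + t^2) := by
    calc D ≤ ‖z - Complex.I * (Real.pi : ℂ) * ((k : ℂ) + 1 / 2)‖ := ciInf_le hbdd k
      _ = _ := habsk
  -- |cosh z|² = sinh²x + cos²y
  have hcosh2 : ‖Complex.cosh z‖ ^ 2 = Real.sinh x ^ 2 + Real.cos y ^ 2 := by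
    have hz : Complex.cosh z = (Real.cosh x * Real.cos y : ℝ) + (Real.sinh x * Real.sin y : ℝ) * Complex.I := by
      rw [show z = (x : ℂ) + (y : ℂ) * Complex.I from (Complex.re_add_im z).symm,
        Complex.cosh_add, Complex.cosh_mul_I, Complex.sinh_mul_I]
      push_cast
      ring
    rw [hz, Complex.norm_add_mul_I, Real.sq_sqrt (by positivity)]
    nlinarith [Real.cosh_sq_sub_sinh_sq x, Real.sin_sq_add_cos_sq y]
  have hcos : Real.cos y ^ 2 = Real.sin t ^ 2 := by
    have hy : y = (t + Real.pi/2) + (k : ℝ) * Real.pi := by rw [ht]; push_cast; ring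
    rw [hy, Real.cos_add_int_mul_pi, Real.cos_add_pi_div_two]
    have h1 : ((-1 : ℝ) ^ k) * ((-1 : ℝ) ^ k) = 1 := by
      rw [← zpow_add₀ (by norm_num : (-1:ℝ) ≠ 0), show k + k = 2 * k by ring, zpow_mul]
      norm_num
    nlinarith [h1]
  have hsin : 2 / Real.pi * |t| ≤ |Real.sin t| := Real.mul_abs_le_abs_sin hts
  have hsinh : |x| ≤ |Real.sinh x| := by
    rw [Real.abs_sinh]
    exact Real.self_le_sinh_iff.2 (abs_nonneg x)
  -- key lower bound on |cosh z|
  have hkey : 2 / Real.pi * Real.sqrt (x^2 + t^2) ≤ ‖Complex.cosh z‖ := by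
    have h2 : (2 / Real.pi * Real.sqrt (x^2 + t^2))^2 ≤ ‖Complex.cosh z‖ ^ 2 := by
      rw [mul_pow, Real.sq_sqrt (by positivity), hcosh2, hcos]
      have hπ2 : (2 / Real.pi)^2 ≤ 1 := by
        have : 2 ≤ Real.pi := Real.two_le_pi
        rw [div_pow]
        rw [div_le_one (by positivity)]
        nlinarith
      have hx2 : x^2 ≤ Real.sinh x ^ 2 := by
        have h := mul_self_le_mul_self (abs_nonneg x) hsinh
        rw [← sq, ← sq, _root_.sq_abs, _root_.sq_abs] at h
        exact h
      have ht2 : (2/Real.pi)^2 * t^2 ≤ Real.sin t ^ 2 := by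
        have h := mul_self_le_mul_self (by positivity : (0:ℝ) ≤ 2/Real.pi * |t|) hsin
        rw [← sq, ← sq, _root_.sq_abs, mul_pow, _root_.sq_abs] at h
        exact h
      have hxx : (2/Real.pi)^2 * x^2 ≤ x^2 := by
        calc (2/Real.pi)^2 * x^2 ≤ 1 * x^2 := mul_le_mul_of_nonneg_right hπ2 (sq_nonneg x)
          _ = x^2 := one_mul _
      linarith
    calc 2 / Real.pi * Real.sqrt (x^2 + t^2)
        = Real.sqrt ((2 / Real.pi * Real.sqrt (x^2 + t^2))^2) := (Real.sqrt_sq (by positivity)).symm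
      _ ≤ Real.sqrt (‖Complex.cosh z‖ ^ 2) := Real.sqrt_le_sqrt h2
      _ = ‖Complex.cosh z‖ := Real.sqrt_sq (norm_nonneg _)
  -- numerator identity
  have habs : ‖Complex.tanh z - (Real.sign x : ℂ)‖
      = Real.exp (-|x|) / ‖Complex.cosh z‖ := by
    have hx0 : x ≠ 0 := by intro h; rw [h] at hx; simp at hx
    rcases hx0.lt_or_gt with hneg | hpos
    · rw [Real.sign_of_neg hneg, abs_of_neg hneg]
      have : Complex.tanh z - ((-1 : ℝ) : ℂ) = Complex.exp z / Complex.cosh z := by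
        rw [Complex.tanh_eq_sinh_div_cosh, ← Complex.sinh_add_cosh]
        field_simp
        push_cast; ring
      rw [this, norm_div, Complex.norm_exp]
      norm_num [hxdef]
    · rw [Real.sign_of_pos hpos, abs_of_pos hpos]
      have : Complex.tanh z - ((1 : ℝ) : ℂ) = -Complex.exp (-z) / Complex.cosh z := by
        rw [Complex.tanh_eq_sinh_div_cosh, ← Complex.sinh_sub_cosh]
        field_simp
        push_cast; ring
      rw [this, norm_div, norm_neg, Complex.norm_exp]
      simp [hxdef]
  rw [habs, div_le_div_iff₀ (norm_pos_iff.2 hc) hDpos]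
  have hcpos : 0 < ‖Complex.cosh z‖ := norm_pos_iff.2 hc
  have hDle' : D ≤ Real.pi / 2 * ‖Complex.cosh z‖ := by
    have := hkey
    calc D ≤ Real.sqrt (x^2 + t^2) := hDle
      _ = Real.pi / 2 * (2 / Real.pi * Real.sqrt (x^2 + t^2)) := by field_simp
      _ ≤ Real.pi / 2 * ‖Complex.cosh z‖ :=
        mul_le_mul_of_nonneg_left hkey (by positivity)
  calc Real.exp (-|x|) * D ≤ Real.exp (-|x|) * (Real.pi / 2 * ‖Complex.cosh z‖) := by
        exact mul_le_mul_of_nonneg_left hDle' (Real.exp_nonneg _)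
    _ ≤ Real.pi / 2 * Real.exp R * Real.exp (-2 * |x|) * ‖Complex.cosh z‖ := by
        have h1 : Real.exp (-|x|) ≤ Real.exp R * Real.exp (-2 * |x|) := by
          rw [← Real.exp_add]
          exact Real.exp_le_exp.2 (by linarith)
        nlinarith [Real.exp_nonneg (-|x|), Real.exp_nonneg R, Real.exp_nonneg (-2*|x|)]
end

section
/- Let B : ℝ → ℂ be continuous and 2π-periodic. Define ⟨B⟩ = (1/(2π))∫₀^{2π} B(s) ds and A(t) = ∫₀^{2π} (s/(2π) − 1/2)·B(t − s) ds. Then A is 2π-periodic and differentiable on ℝ, and A′(t) = ⟨B⟩ − B(t) for every t ∈ ℝ. -/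
/-- If `B : ℝ → ℂ` is continuous and `2π`-periodic, then
`A(t) = ∫₀^{2π} (s/(2π) − 1/2) B(t − s) ds` is `2π`-periodic and differentiable with
`A′(t) = ⟨B⟩ − B(t)`, where `⟨B⟩ = (1/(2π)) ∫₀^{2π} B(s) ds`. -/
theorem stmt_6 (B : ℝ → ℂ) (hB : Continuous B) (hper : Function.Periodic B (2 * Real.pi)) :
    Function.Periodic
      (fun t : ℝ => ∫ s in (0:ℝ)..(2 * Real.pi),
        ((s / (2 * Real.pi) - 1 / 2 : ℝ) : ℂ) * B (t - s)) (2 * Real.pi) ∧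
    ∀ t : ℝ,
      HasDerivAt
        (fun t : ℝ => ∫ s in (0:ℝ)..(2 * Real.pi),
          ((s / (2 * Real.pi) - 1 / 2 : ℝ) : ℂ) * B (t - s))
        (((1 / (2 * Real.pi) : ℝ) : ℂ) * (∫ s in (0:ℝ)..(2 * Real.pi), B s) - B t) t := by
  have hπ : (2 * Real.pi) ≠ 0 := by positivity
  have hπC : ((2 * Real.pi : ℝ) : ℂ) ≠ 0 := by exact_mod_cast hπ
  set c : ℂ := ∫ s in (0:ℝ)..(2 * Real.pi), B s with hc
  set f : ℝ → ℂ := fun u => (u : ℂ) * B u with hfdef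
  have hf : Continuous f := Complex.continuous_ofReal.mul hB
  have key : ∀ t : ℝ,
      (∫ s in (0:ℝ)..(2 * Real.pi), ((s / (2 * Real.pi) - 1 / 2 : ℝ) : ℂ) * B (t - s))
      = (((t : ℂ) / (2 * Real.pi) - 1 / 2) * c
        - (1 / (2 * Real.pi)) * ((∫ u in (0:ℝ)..t, f u)
            - ∫ u in (0:ℝ)..(t - 2 * Real.pi), f u)) := by
    intro t
    have h1 : (∫ s in (0:ℝ)..(2 * Real.pi), ((s / (2 * Real.pi) - 1 / 2 : ℝ) : ℂ) * B (t - s))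
        = ∫ s in (0:ℝ)..(2 * Real.pi),
            (fun u => (((t - u) / (2 * Real.pi) - 1 / 2 : ℝ) : ℂ) * B u) (t - s) := by
      apply intervalIntegral.integral_congr
      intro s _
      simp [sub_sub_cancel]
    rw [h1, intervalIntegral.integral_comp_sub_left
      (fun u => (((t - u) / (2 * Real.pi) - 1 / 2 : ℝ) : ℂ) * B u) t]
    simp only [sub_zero]
    have h2 : (∫ u in (t - 2 * Real.pi)..t,
        (((t - u) / (2 * Real.pi) - 1 / 2 : ℝ) : ℂ) * B u)
        = ∫ u in (t - 2 * Real.pi)..t,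
          (((t : ℂ) / (2 * Real.pi) - 1 / 2) * B u - (1 / (2 * Real.pi)) * f u) := by
      apply intervalIntegral.integral_congr
      intro u _
      push_cast
      ring
    rw [h2, intervalIntegral.integral_sub
        ((hB.intervalIntegrable _ _).const_mul _) ((hf.intervalIntegrable _ _).const_mul _),
      intervalIntegral.integral_const_mul, intervalIntegral.integral_const_mul]
    have hcB : (∫ u in (t - 2 * Real.pi)..t, B u) = c := by
      have := hper.intervalIntegral_add_eq (t - 2 * Real.pi) 0
      simpa [sub_add_cancel] using this
    have hcf : (∫ u in (t - 2 * Real.pi)..t, f u)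
        = (∫ u in (0:ℝ)..t, f u) - ∫ u in (0:ℝ)..(t - 2 * Real.pi), f u := by
      rw [intervalIntegral.integral_interval_sub_left (hf.intervalIntegrable _ _)
        (hf.intervalIntegrable _ _)]
    rw [hcB, hcf]
  constructor
  · intro t
    simp only
    apply intervalIntegral.integral_congr
    intro s _
    simp only [show t + 2 * Real.pi - s = (t - s) + 2 * Real.pi from by ring, hper (t - s)]
  · intro t
    have hH1 : HasDerivAt (fun x : ℝ => ∫ u in (0:ℝ)..x, f u) (f t) t :=
      intervalIntegral.integral_hasDerivAt_right (hf.intervalIntegrable _ _)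
        (hf.stronglyMeasurableAtFilter _ _) hf.continuousAt
    have hH2 : HasDerivAt (fun x : ℝ => ∫ u in (0:ℝ)..(x - 2 * Real.pi), f u)
        (f (t - 2 * Real.pi)) t := by
      have h := intervalIntegral.integral_hasDerivAt_right
        (hf.intervalIntegrable 0 (t - 2 * Real.pi))
        (hf.stronglyMeasurableAtFilter _ _) hf.continuousAt
      exact h.comp_sub_const t (2 * Real.pi)
    have hlin : HasDerivAt (fun x : ℝ => ((x : ℂ) / (2 * Real.pi) - 1 / 2) * c)
        ((1 / (2 * Real.pi)) * c) t := by
      have h0 : HasDerivAt (fun x : ℝ => (x : ℂ)) 1 t := Complex.ofRealCLM.hasDerivAt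
      have h1 := ((h0.div_const ((2 : ℂ) * Real.pi)).sub_const (1 / 2)).mul_const c
      convert h1 using 1
    have hφ : HasDerivAt (fun x : ℝ => ((x : ℂ) / (2 * Real.pi) - 1 / 2) * c
        - (1 / (2 * Real.pi)) * ((∫ u in (0:ℝ)..x, f u)
            - ∫ u in (0:ℝ)..(x - 2 * Real.pi), f u))
        ((1 / (2 * Real.pi)) * c - (1 / (2 * Real.pi)) * (f t - f (t - 2 * Real.pi))) t :=
      hlin.sub ((hH1.sub hH2).const_mul _)
    have hBt : B (t - 2 * Real.pi) = B t := by
      simpa [sub_add_cancel] using (hper (t - 2 * Real.pi)).symm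
    have hderiv : ((1 / (2 * Real.pi) : ℝ) : ℂ) * c - B t
        = (1 / (2 * Real.pi)) * c - (1 / (2 * Real.pi)) * (f t - f (t - 2 * Real.pi)) := by
      have hπ' : (Real.pi : ℂ) ≠ 0 := by exact_mod_cast Real.pi_ne_zero
      simp only [hfdef, hBt]
      push_cast
      field_simp
      ring
    rw [hderiv]
    exact hφ.congr_of_eventuallyEq (Filter.Eventually.of_forall key)
end

section
/- There exist δ ∈ (0, 1/(2e)) and C > 0 with the following property. Let F : ℂ → ℝ satisfy |F(μ) − F(μ′)| ≤ |μ − μ′| for all μ, μ′ with |μ|, |μ′| ≤ 1, and |F(μ)| ≤ δ² for all |μ| ≤ 1. Then: (i) for every real x with 0 < |x| ≤ δ there is a unique y ∈ [−δ, δ] such that y·ln(1/|x + iy|) = F(x + iy); denote this solution by f(x). (ii) If in addition |F(x)| ≤ |x|·ln(1/|x|), then |f(x) − F(x)/ln(1/|x|)| ≤ C·|F(x)|/(ln(1/|x|))². -/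
set_option maxHeartbeats 1000000

private lemma aux_exp8 : Real.exp 8 < 3000 := by
  have h := Real.exp_one_lt_d9
  have h1 : Real.exp 8 = (Real.exp 1)^8 := by
    rw [← Real.exp_nat_mul]; norm_num
  rw [h1]
  calc (Real.exp 1)^8 ≤ (2.7182818286:ℝ)^8 :=
        pow_le_pow_left₀ (Real.exp_pos 1).le h.le 8
    _ < 3000 := by norm_num

private lemma aux_log_le {s : ℝ} (h0 : 0 < s) (h2 : s ≤ 2/10000) : Real.log s ≤ -8 := by
  rw [Real.log_le_iff_le_exp h0]
  have h3 : Real.exp (-8) = (Real.exp 8)⁻¹ := Real.exp_neg 8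
  have h4 : (1:ℝ)/3000 ≤ (Real.exp 8)⁻¹ := by
    rw [one_div]
    exact inv_anti₀ (Real.exp_pos 8) aux_exp8.le
  linarith

private lemma aux_log_ge {r : ℝ} (h0 : 0 < r) (h2 : r^2 ≤ 2/10000) : 4 ≤ Real.log (1/r) := by
  have h := aux_log_le (by positivity) h2
  rw [Real.log_pow] at h
  rw [one_div, Real.log_inv]
  push_cast at h; linarith


private lemma aux_hasDeriv {x : ℝ} (hx : x ≠ 0) (y : ℝ) :
    HasDerivAt (fun y : ℝ => -(y/2) * Real.log (x^2+y^2) - 3*y)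
      (-(1/2) * Real.log (x^2+y^2) + -(y/2) * ((x^2+y^2)⁻¹ * (2*y)) - 3) y := by
  have hne : x^2 + y^2 ≠ 0 := by positivity
  have d1 : HasDerivAt (fun y : ℝ => x^2 + y^2) (2*y) y := by
    simpa using (hasDerivAt_pow 2 y).const_add (x^2)
  have d2 : HasDerivAt (fun y : ℝ => Real.log (x^2+y^2)) ((x^2+y^2)⁻¹ * (2*y)) y :=
    by have := (Real.hasDerivAt_log hne).comp y d1; exact this
  have d3 : HasDerivAt (fun y : ℝ => -(y/2)) (-(1/2)) y := by
    exact ((hasDerivAt_id y).div_const 2).neg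
  have d4 : HasDerivAt (fun y : ℝ => 3*y) 3 y := by
    simpa using (hasDerivAt_id y).const_mul 3
  exact (d3.mul d2).sub d4

private lemma aux_mono {x : ℝ} (hx : x ≠ 0) (hx2 : x^2 ≤ 1/10000) :
    MonotoneOn (fun y : ℝ => -(y/2) * Real.log (x^2+y^2) - 3*y)
      (Set.Icc (-(1/100)) (1/100)) := by
  apply monotoneOn_of_deriv_nonneg (convex_Icc _ _)
  · exact Continuous.continuousOn (by
      refine continuous_iff_continuousAt.2 fun y => (aux_hasDeriv hx y).continuousAt)
  · intro y hy
    exact ((aux_hasDeriv hx y).differentiableAt).differentiableWithinAt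
  · intro y hy
    rw [interior_Icc] at hy
    rw [(aux_hasDeriv hx y).deriv]
    have hs0 : 0 < x^2 + y^2 := by positivity
    have hy2 : y^2 ≤ 1/10000 := by
      obtain ⟨h1, h2⟩ := hy; nlinarith
    have hlog : Real.log (x^2+y^2) ≤ -8 := by
      exact aux_log_le hs0 (by linarith)
    have hfrac : -(y/2) * ((x^2+y^2)⁻¹ * (2*y)) = -(y^2/(x^2+y^2)) := by
      field_simp
    have hfle : y^2/(x^2+y^2) ≤ 1 := by
      rw [div_le_one hs0]; nlinarith
    rw [hfrac]
    have : 0 ≤ y^2/(x^2+y^2) := by positivity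
    linarith

/-- For a uniformly Lipschitz `F : ℂ → ℝ`, small in modulus, the equation
`(Im μ) ln(1/|μ|) = F(μ)` defines near `0` a curve `Im μ = f(Re μ)`, and in the regime
`|F(x)| ≤ |x| ln(1/|x|)` one has `|f(x) − F(x)/ln(1/|x|)| ≤ C |F(x)|/(ln(1/|x|))²`. -/
theorem stmt_9 :
    ∃ δ C : ℝ, 0 < δ ∧ δ < 1 / (2 * Real.exp 1) ∧ 0 < C ∧
      ∀ F : ℂ → ℝ,
        (∀ μ μ' : ℂ, ‖μ‖ ≤ 1 → ‖μ'‖ ≤ 1 →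
          |F μ - F μ'| ≤ ‖μ - μ'‖) →
        (∀ μ : ℂ, ‖μ‖ ≤ 1 → |F μ| ≤ δ ^ 2) →
        ∀ x : ℝ, 0 < |x| → |x| ≤ δ →
          (∃! y : ℝ, y ∈ Set.Icc (-δ) δ ∧
              y * Real.log (1 / ‖(x : ℂ) + (y : ℂ) * Complex.I‖)
                = F ((x : ℂ) + (y : ℂ) * Complex.I)) ∧
          (|F (x : ℂ)| ≤ |x| * Real.log (1 / |x|) →
            ∀ y : ℝ, y ∈ Set.Icc (-δ) δ →
              y * Real.log (1 / ‖(x : ℂ) + (y : ℂ) * Complex.I‖)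
                = F ((x : ℂ) + (y : ℂ) * Complex.I) →
              |y - F (x : ℂ) / Real.log (1 / |x|)|
                ≤ C * |F (x : ℂ)| / (Real.log (1 / |x|)) ^ 2) := by
  refine ⟨1/100, 8, by norm_num, ?_, by norm_num, ?_⟩

  · have h := Real.exp_one_lt_d9
    have h2 : 2 * Real.exp 1 < 100 := by nlinarith [Real.exp_pos 1]
    have := one_div_lt_one_div_of_lt (by positivity : (0:ℝ) < 2 * Real.exp 1) h2
    linarith
  intro F hLip hSmall x hx0 hxδ
  have hxne : x ≠ 0 := abs_pos.mp hx0
  have hx2 : x ^ 2 ≤ 1/10000 := by nlinarith [sq_abs x]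
  have habs : ∀ y : ℝ, ‖(x:ℂ) + (y:ℂ)*Complex.I‖ = Real.sqrt (x^2+y^2) :=
    fun y => Complex.norm_add_mul_I x y
  have hsqr : ∀ y : ℝ, (‖(x:ℂ) + (y:ℂ)*Complex.I‖)^2 = x^2+y^2 := by
    intro y; rw [habs y]; exact Real.sq_sqrt (by positivity)
  have habspos : ∀ y : ℝ, 0 < ‖(x:ℂ) + (y:ℂ)*Complex.I‖ := by
    intro y; rw [habs y]; exact Real.sqrt_pos.2 (by positivity)
  have key_h : ∀ y : ℝ, y * Real.log (1 / ‖(x:ℂ)+(y:ℂ)*Complex.I‖)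
      = -(y/2) * Real.log (x^2+y^2) := by
    intro y
    rw [one_div, Real.log_inv, habs y, Real.log_sqrt (by positivity)]
    ring
  have hsum : ∀ y ∈ Set.Icc (-(1/100):ℝ) (1/100), x^2 + y^2 ≤ 2/10000 := by
    rintro y ⟨h1, h2⟩; nlinarith
  have habs1 : ∀ y ∈ Set.Icc (-(1/100):ℝ) (1/100),
      ‖(x:ℂ) + (y:ℂ)*Complex.I‖ ≤ 1 := by
    intro y hy
    nlinarith [hsqr y, habspos y, hsum y hy]
  have hlog4 : ∀ y ∈ Set.Icc (-(1/100):ℝ) (1/100),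
      4 ≤ Real.log (1 / ‖(x:ℂ)+(y:ℂ)*Complex.I‖) := by
    intro y hy
    exact aux_log_ge (habspos y) (by rw [hsqr]; exact hsum y hy)
  have hF_le : ∀ y ∈ Set.Icc (-(1/100):ℝ) (1/100),
      |F ((x:ℂ)+(y:ℂ)*Complex.I)| ≤ 1/10000 := by
    intro y hy
    have := hSmall _ (habs1 y hy)
    norm_num at this ⊢
    linarith
  have hFlip : ∀ y₁ ∈ Set.Icc (-(1/100):ℝ) (1/100), ∀ y₂ ∈ Set.Icc (-(1/100):ℝ) (1/100),
      |F ((x:ℂ)+(y₁:ℂ)*Complex.I) - F ((x:ℂ)+(y₂:ℂ)*Complex.I)| ≤ |y₁ - y₂| := by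
    intro y₁ h₁ y₂ h₂
    have h := hLip _ _ (habs1 y₁ h₁) (habs1 y₂ h₂)
    have hd : ((x:ℂ)+(y₁:ℂ)*Complex.I) - ((x:ℂ)+(y₂:ℂ)*Complex.I)
        = ((y₁-y₂:ℝ):ℂ)*Complex.I := by push_cast; ring
    rwa [hd, norm_mul, Complex.norm_I, Complex.norm_real, Real.norm_eq_abs, mul_one] at h
  have hmono := aux_mono hxne hx2
  have hstep : ∀ y₁ ∈ Set.Icc (-(1/100):ℝ) (1/100), ∀ y₂ ∈ Set.Icc (-(1/100):ℝ) (1/100),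
      y₁ ≤ y₂ →
      y₁ * Real.log (1 / ‖(x:ℂ)+(y₁:ℂ)*Complex.I‖) + 3*(y₂-y₁)
        ≤ y₂ * Real.log (1 / ‖(x:ℂ)+(y₂:ℂ)*Complex.I‖) := by
    intro y₁ h₁ y₂ h₂ hle
    have h := hmono h₁ h₂ hle
    simp only at h
    rw [key_h y₁, key_h y₂]
    linarith
  have huniq : ∀ y₁ ∈ Set.Icc (-(1/100):ℝ) (1/100), ∀ y₂ ∈ Set.Icc (-(1/100):ℝ) (1/100),
      y₁ * Real.log (1 / ‖(x:ℂ)+(y₁:ℂ)*Complex.I‖) = F ((x:ℂ)+(y₁:ℂ)*Complex.I) →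
      y₂ * Real.log (1 / ‖(x:ℂ)+(y₂:ℂ)*Complex.I‖) = F ((x:ℂ)+(y₂:ℂ)*Complex.I) →
      y₁ = y₂ := by
    have key : ∀ y₁ ∈ Set.Icc (-(1/100):ℝ) (1/100), ∀ y₂ ∈ Set.Icc (-(1/100):ℝ) (1/100),
        y₁ * Real.log (1 / ‖(x:ℂ)+(y₁:ℂ)*Complex.I‖) = F ((x:ℂ)+(y₁:ℂ)*Complex.I) →
        y₂ * Real.log (1 / ‖(x:ℂ)+(y₂:ℂ)*Complex.I‖) = F ((x:ℂ)+(y₂:ℂ)*Complex.I) →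
        y₁ ≤ y₂ → y₁ = y₂ := by
      intro y₁ h₁ y₂ h₂ e₁ e₂ hle
      have hs := hstep y₁ h₁ y₂ h₂ hle
      rw [e₁, e₂] at hs
      have hl := hFlip y₂ h₂ y₁ h₁
      have h3 : F ((x:ℂ)+(y₂:ℂ)*Complex.I) - F ((x:ℂ)+(y₁:ℂ)*Complex.I)
          ≤ |F ((x:ℂ)+(y₂:ℂ)*Complex.I) - F ((x:ℂ)+(y₁:ℂ)*Complex.I)| := le_abs_self _
      rw [abs_of_nonneg (by linarith : (0:ℝ) ≤ y₂ - y₁)] at hl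
      linarith
    intro y₁ h₁ y₂ h₂ e₁ e₂
    rcases le_total y₁ y₂ with h | h
    · exact key y₁ h₁ y₂ h₂ e₁ e₂ h
    · exact (key y₂ h₂ y₁ h₁ e₂ e₁ h).symm
  -- existence via IVT
  have clog : Continuous (fun y : ℝ => Real.log (x^2+y^2)) :=
    continuous_iff_continuousAt.2 fun y => (Real.continuousAt_log (by positivity)).comp (by fun_prop)
  have c1 : Continuous (fun y : ℝ => -(y/2) * Real.log (x^2+y^2)) :=
    ((continuous_id.div_const 2).neg).mul clog
  have cF : ContinuousOn (fun y : ℝ => F ((x:ℂ)+(y:ℂ)*Complex.I))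
      (Set.Icc (-(1/100):ℝ) (1/100)) := by
    apply LipschitzOnWith.continuousOn (K := 1)
    refine LipschitzOnWith.of_dist_le_mul fun y₁ h₁ y₂ h₂ => ?_
    rw [Real.dist_eq, Real.dist_eq, NNReal.coe_one, one_mul]
    exact hFlip y₁ h₁ y₂ h₂
  have cg : ContinuousOn (fun y : ℝ => -(y/2) * Real.log (x^2+y^2)
      - F ((x:ℂ)+(y:ℂ)*Complex.I)) (Set.Icc (-(1/100):ℝ) (1/100)) :=
    c1.continuousOn.sub cF
  have hmemr : (1/100 : ℝ) ∈ Set.Icc (-(1/100):ℝ) (1/100) := by norm_num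
  have hmeml : (-(1/100) : ℝ) ∈ Set.Icc (-(1/100):ℝ) (1/100) := by norm_num
  have hgr : 0 ≤ -((1/100:ℝ)/2) * Real.log (x^2+(1/100)^2)
      - F ((x:ℂ)+((1/100:ℝ):ℂ)*Complex.I) := by
    have h4 := hlog4 (1/100) hmemr
    have hF := hF_le (1/100) hmemr
    have hk := key_h (1/100)
    have habsle := abs_le.mp hF
    nlinarith [h4, habsle.1, habsle.2, hk]
  have hgl : -(-(1/100:ℝ)/2) * Real.log (x^2+(-(1/100))^2)
      - F ((x:ℂ)+((-(1/100):ℝ):ℂ)*Complex.I) ≤ 0 := by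
    have h4 := hlog4 (-(1/100)) hmeml
    have hF := hF_le (-(1/100)) hmeml
    have hk := key_h (-(1/100))
    have habsle := abs_le.mp hF
    nlinarith [h4, habsle.1, habsle.2, hk]
  obtain ⟨y₀, hy₀mem, hy₀eq⟩ :=
    intermediate_value_Icc (by norm_num : (-(1/100):ℝ) ≤ 1/100) cg ⟨hgl, hgr⟩
  have hy₀sol : y₀ * Real.log (1 / ‖(x:ℂ)+(y₀:ℂ)*Complex.I‖)
      = F ((x:ℂ)+(y₀:ℂ)*Complex.I) := by
    rw [key_h y₀]
    simp only at hy₀eq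
    linarith
  constructor
  · exact ⟨y₀, ⟨hy₀mem, hy₀sol⟩, fun y' hy' => huniq y' hy'.1 y₀ hy₀mem hy'.2 hy₀sol⟩
  -- part (ii)
  intro hFx y hyIcc heq
  set r := ‖(x:ℂ)+(y:ℂ)*Complex.I‖ with hrdef
  set L := Real.log (1/r) with hLdef
  set L₀ := Real.log (1/|x|) with hL0def
  have hrpos : 0 < r := habspos y
  have hr2 : r^2 = x^2+y^2 := hsqr y
  have hL4 : 4 ≤ L := hlog4 y hyIcc
  have hL04 : 4 ≤ L₀ := aux_log_ge hx0 (by rw [sq_abs]; linarith)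
  have hxr : |x| ≤ r := by
    rw [hrdef, habs y, ← Real.sqrt_sq_eq_abs]
    exact Real.sqrt_le_sqrt (by nlinarith)
  have hrxy : r ≤ |x| + |y| := by
    rw [hrdef, habs y]
    calc Real.sqrt (x^2+y^2) ≤ Real.sqrt ((|x|+|y|)^2) := by
          apply Real.sqrt_le_sqrt
          nlinarith [sq_abs x, sq_abs y, mul_nonneg (abs_nonneg x) (abs_nonneg y)]
      _ = |x| + |y| := Real.sqrt_sq (by positivity)
  have hLL0 : L ≤ L₀ := by
    apply Real.log_le_log (by positivity)
    exact one_div_le_one_div_of_le hx0 hxr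
  -- |y| (L-1) ≤ |F x|
  have habsx1 : ‖(x:ℂ)‖ ≤ 1 := by
    rw [Complex.norm_real, Real.norm_eq_abs]; linarith
  have hFmudiff : |F ((x:ℂ)+(y:ℂ)*Complex.I) - F ((x:ℂ))| ≤ |y| := by
    have h := hLip _ _ (habs1 y hyIcc) habsx1
    have hd : ((x:ℂ)+(y:ℂ)*Complex.I) - (x:ℂ) = ((y:ℝ):ℂ)*Complex.I := by push_cast; ring
    rwa [hd, norm_mul, Complex.norm_I, Complex.norm_real, Real.norm_eq_abs, mul_one] at h
  have hyL : |y| * L = |F ((x:ℂ)+(y:ℂ)*Complex.I)| := by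
    rw [← heq, abs_mul, abs_of_nonneg (by linarith : (0:ℝ) ≤ L)]
  have h1 : |y| * (L - 1) ≤ |F ((x:ℂ))| := by
    have htri : |F ((x:ℂ)+(y:ℂ)*Complex.I)| - |F ((x:ℂ))|
        ≤ |F ((x:ℂ)+(y:ℂ)*Complex.I) - F ((x:ℂ))| := abs_sub_abs_le_abs_sub _ _
    nlinarith [hFmudiff, hyL]
  have h2 : |y| * (L - 1) ≤ |x| * L₀ := le_trans h1 hFx
  -- gap estimate
  have hgapm : (L₀ - L) * |x| ≤ |y| := by
    have he1 : L = -Real.log r := by rw [hLdef, one_div, Real.log_inv]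
    have he2 : L₀ = -Real.log |x| := by rw [hL0def, one_div, Real.log_inv]
    have he3 : L₀ - L = Real.log (r / |x|) := by
      rw [he1, he2, Real.log_div (ne_of_gt hrpos) (by simpa using hxne)]
      ring
    have hlog := Real.log_le_sub_one_of_pos (div_pos hrpos hx0)
    have hmul := mul_le_mul_of_nonneg_right hlog (abs_nonneg x)
    have hfs : (r / |x| - 1) * |x| = r - |x| := by field_simp
    rw [hfs] at hmul
    rw [he3]
    calc Real.log (r / |x|) * |x| ≤ r - |x| := hmul
      _ ≤ |y| := by linarith
  have hgap3 : L₀ - L ≤ L₀ / 3 := by nlinarith [h2, hgapm, abs_nonneg y]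
  have hL1 : L₀ / 2 ≤ L - 1 := by linarith
  have hy2x : |y| ≤ 2 * |x| := by nlinarith [h2, abs_nonneg y]
  have hgap2 : L₀ - L ≤ 2 := by nlinarith [hgapm, hy2x, hx0]
  have hyF : |y| * L₀ ≤ 2 * |F ((x:ℂ))| := by nlinarith [h1, abs_nonneg y]
  -- decomposition
  have hLne : L ≠ 0 := by linarith
  have hL0ne : L₀ ≠ 0 := by linarith
  have decomp : y - F ((x:ℂ)) / L₀
      = (F ((x:ℂ)+(y:ℂ)*Complex.I) - F ((x:ℂ))) / L
        + F ((x:ℂ)) * (L₀ - L) / (L * L₀) := by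
    rw [← heq]
    field_simp
    ring
  rw [decomp]
  have hT1 : |(F ((x:ℂ)+(y:ℂ)*Complex.I) - F ((x:ℂ))) / L| ≤ 4 * |F ((x:ℂ))| / L₀^2 := by
    rw [abs_div, abs_of_pos (by linarith : (0:ℝ) < L), div_le_div_iff₀ (by linarith) (by positivity)]
    nlinarith [hFmudiff, hyF, abs_nonneg (F ((x:ℂ)+(y:ℂ)*Complex.I) - F ((x:ℂ))),
      abs_nonneg (F ((x:ℂ))), mul_le_mul_of_nonneg_right hyF (by linarith : (0:ℝ) ≤ L₀)]
  have hT2 : |F ((x:ℂ)) * (L₀ - L) / (L * L₀)| ≤ 4 * |F ((x:ℂ))| / L₀^2 := by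
    rw [abs_div, abs_mul, abs_of_nonneg (by linarith : (0:ℝ) ≤ L₀ - L),
      abs_of_pos (by positivity : (0:ℝ) < L * L₀),
      div_le_div_iff₀ (by positivity) (by positivity)]
    have hL0nn : (0:ℝ) ≤ L₀ := by linarith
    have hA : (L₀ - L) * L₀^2 ≤ 4 * (L * L₀) := by
      nlinarith [mul_le_mul_of_nonneg_right hgap2 (sq_nonneg L₀),
        mul_le_mul_of_nonneg_left hL1 hL0nn]
    nlinarith [mul_le_mul_of_nonneg_left hA (abs_nonneg (F ((x:ℂ))))]
  calc |(F ((x:ℂ)+(y:ℂ)*Complex.I) - F ((x:ℂ))) / L + F ((x:ℂ)) * (L₀ - L) / (L * L₀)|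
      ≤ |(F ((x:ℂ)+(y:ℂ)*Complex.I) - F ((x:ℂ))) / L| + |F ((x:ℂ)) * (L₀ - L) / (L * L₀)| :=
        abs_add_le _ _
    _ ≤ 4 * |F ((x:ℂ))| / L₀^2 + 4 * |F ((x:ℂ))| / L₀^2 := add_le_add hT1 hT2
    _ = 8 * |F ((x:ℂ))| / L₀^2 := by ring
end

section
/- There exist δ ∈ (0, 1/(2e)), K ≥ 1 and C > 0 with the following property. Let F : ℂ → ℝ satisfy |F(μ) − F(μ′)| ≤ |μ − μ′| for all μ, μ′ with |μ|, |μ′| ≤ 1, and |F(μ)| ≤ δ² for all |μ| ≤ 1, and for x real with 0 < |x| ≤ δ let f(x) be the unique y ∈ [−δ, δ] with y·ln(1/|x + iy|) = F(x + iy). If x satisfies F(x) ≥ K·|x|·ln(1/|x|), then |f(x) − F(x)/ln(1/F(x))| ≤ C · F(x) · ln(ln(1/F(x))) / (ln(1/F(x)))². -/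
lemma l_abs (x y : ℝ) : ‖(x:ℂ) + (y:ℂ)*Complex.I‖ = Real.sqrt (x^2+y^2) :=
  Complex.norm_add_mul_I x y

lemma l_log (x y : ℝ) : Real.log (1 / ‖(x:ℂ)+(y:ℂ)*Complex.I‖)
    = -(Real.log (x^2+y^2)/2) := by
  rw [one_div, Real.log_inv, l_abs, Real.log_sqrt (by positivity)]

lemma l_deriv (x : ℝ) (hx : x ≠ 0) (y : ℝ) :
    HasDerivAt (fun y : ℝ => y * -(Real.log (x^2+y^2)/2) - 2*y)
      (-(Real.log (x^2+y^2)/2) - y^2/(x^2+y^2) - 2) y := by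
  have hpos : (0:ℝ) < x^2+y^2 := by positivity
  have h1 : HasDerivAt (fun y : ℝ => x^2+y^2) (2*y) y := by
    simpa using (hasDerivAt_pow 2 y).const_add (x^2)
  have h2 := h1.log hpos.ne'
  have h3 := (hasDerivAt_id y).mul h2
  have h4 := (h3.const_mul (-(1/2) : ℝ)).sub ((hasDerivAt_id y).const_mul 2)
  have hfun : (fun y : ℝ => y * -(Real.log (x^2+y^2)/2) - 2*y)
      = fun t : ℝ => -(1/2) * (id t * Real.log (x^2+t^2)) - 2 * id t := by
    funext t; simp only [id]; ring
  rw [hfun]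
  refine h4.congr_deriv ?_
  simp only [id]
  ring

lemma l_mono (x : ℝ) (hx : x ≠ 0) (hxδ : |x| ≤ Real.exp (-5)) :
    StrictMonoOn (fun y : ℝ => y * -(Real.log (x^2+y^2)/2) - 2*y)
      (Set.Icc (-Real.exp (-5)) (Real.exp (-5))) := by
  have he2 : (2:ℝ) ≤ Real.exp 1 := by linarith only [Real.add_one_le_exp 1]
  apply strictMonoOn_of_deriv_pos (convex_Icc _ _)
  · exact Continuous.continuousOn (continuous_iff_continuousAt.mpr
      fun y => (l_deriv x hx y).continuousAt)
  · intro y hy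
    rw [interior_Icc, Set.mem_Ioo] at hy
    rw [(l_deriv x hx y).deriv]
    have hpos : (0:ℝ) < x^2+y^2 := by positivity
    have hxe : |x| ^ 2 ≤ Real.exp (-5) ^ 2 := by
      nlinarith [abs_nonneg x]
    have hye : y ^ 2 ≤ Real.exp (-5) ^ 2 := by nlinarith [hy.1, hy.2]
    have hsum : x^2 + y^2 ≤ 2 * Real.exp (-5)^2 := by
      rw [← sq_abs x] at *; nlinarith
    have h28 : (2:ℝ) * Real.exp (-5)^2 ≤ Real.exp (-8) := by
      have : Real.exp (-5)^2 = Real.exp (-10) := by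
        rw [sq, ← Real.exp_add]; norm_num
      rw [this]
      have : Real.exp (-8) = Real.exp 2 * Real.exp (-10) := by
        rw [← Real.exp_add]; norm_num
      rw [this]
      have h22 : Real.exp 2 = Real.exp 1 * Real.exp 1 := by
        rw [← Real.exp_add]; norm_num
      have h4 : (4:ℝ) ≤ Real.exp 2 := by nlinarith
      nlinarith [Real.exp_pos (-10)]
    have hlog : Real.log (x^2+y^2) ≤ -8 := by
      calc Real.log (x^2+y^2) ≤ Real.log (Real.exp (-8)) :=
            Real.log_le_log hpos (le_trans hsum h28)
        _ = -8 := Real.log_exp _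
    have hdiv : y^2/(x^2+y^2) ≤ 1 := by
      rw [div_le_one hpos]; nlinarith [sq_nonneg x]
    linarith

set_option maxHeartbeats 2000000 in
/-- For a uniformly Lipschitz `F : ℂ → ℝ`, small in modulus, the equation
`(Im μ) ln(1/|μ|) = F(μ)` defines near `0` a curve `Im μ = f(Re μ)`, and in the regime
`F(x) ≥ K |x| ln(1/|x|)` one has
`|f(x) − F(x)/ln(1/F(x))| ≤ C F(x) ln(ln(1/F(x))) / (ln(1/F(x)))²`. -/
theorem stmt_10 :
    ∃ δ K C : ℝ, 0 < δ ∧ δ < 1 / (2 * Real.exp 1) ∧ 1 ≤ K ∧ 0 < C ∧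
      ∀ F : ℂ → ℝ,
        (∀ μ μ' : ℂ, ‖μ‖ ≤ 1 → ‖μ'‖ ≤ 1 →
          |F μ - F μ'| ≤ ‖μ - μ'‖) →
        (∀ μ : ℂ, ‖μ‖ ≤ 1 → |F μ| ≤ δ ^ 2) →
        ∀ x : ℝ, 0 < |x| → |x| ≤ δ →
          (∃! y : ℝ, y ∈ Set.Icc (-δ) δ ∧
              y * Real.log (1 / ‖(x : ℂ) + (y : ℂ) * Complex.I‖)
                = F ((x : ℂ) + (y : ℂ) * Complex.I)) ∧
          (K * (|x| * Real.log (1 / |x|)) ≤ F (x : ℂ) →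
            ∀ y : ℝ, y ∈ Set.Icc (-δ) δ →
              y * Real.log (1 / ‖(x : ℂ) + (y : ℂ) * Complex.I‖)
                = F ((x : ℂ) + (y : ℂ) * Complex.I) →
              |y - F (x : ℂ) / Real.log (1 / F (x : ℂ))|
                ≤ C * F (x : ℂ) * Real.log (Real.log (1 / F (x : ℂ)))
                    / (Real.log (1 / F (x : ℂ))) ^ 2) := by
  have hδpos : (0:ℝ) < Real.exp (-5) := Real.exp_pos _
  have he2 : (2:ℝ) ≤ Real.exp 1 := by linarith only [Real.add_one_le_exp 1]
  have hδlt : Real.exp (-5) < 1 / (2 * Real.exp 1) := by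
    rw [lt_div_iff₀ (by positivity)]
    have h1 : Real.exp (-5) * Real.exp 1 = Real.exp (-4) := by
      rw [← Real.exp_add]; norm_num
    have h2 : Real.exp (-4) < Real.exp (-1) := Real.exp_lt_exp.mpr (by norm_num)
    have h3 : Real.exp (-1) * Real.exp 1 = 1 := by rw [← Real.exp_add]; norm_num
    nlinarith only [h1, h2, h3, he2, Real.exp_pos (-1), Real.exp_pos (-5)]
  refine ⟨Real.exp (-5), 1, 4, hδpos, hδlt, le_refl 1, by norm_num, ?_⟩
  intro F hLip hF2 x hx0 hxδ
  set δ : ℝ := Real.exp (-5) with hδdef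
  clear_value δ
  have hxne : x ≠ 0 := fun h => by simp [h] at hx0
  -- bound on 2δ
  have h2δ4 : 2 * δ ≤ Real.exp (-4) := by
    rw [hδdef, show Real.exp (-4) = Real.exp 1 * Real.exp (-5) by rw [← Real.exp_add]; norm_num]
    nlinarith only [he2, Real.exp_pos (-5)]
  have hδ1 : 2 * δ ≤ 1 := by
    have h4 : Real.exp (-4) ≤ 1 := by
      rw [show (1:ℝ) = Real.exp 0 by rw [Real.exp_zero]]
      exact Real.exp_le_exp.mpr (by norm_num)
    linarith
  -- abs bounds for membership
  have habs_le : ∀ y : ℝ, |y| ≤ δ → ‖(x:ℂ) + (y:ℂ)*Complex.I‖ ≤ 2*δ := by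
    intro y hy
    rw [l_abs]
    have h1 : Real.sqrt (x^2+y^2) ≤ Real.sqrt ((2*δ)^2) := by
      apply Real.sqrt_le_sqrt
      have hx2 : x^2 ≤ δ^2 := by
        rw [← sq_abs x]; nlinarith only [hxδ, abs_nonneg x]
      have hy2 : y^2 ≤ δ^2 := by
        rw [← sq_abs y]; nlinarith only [hy, abs_nonneg y]
      nlinarith only [hx2, hy2, sq_nonneg δ]
    rwa [Real.sqrt_sq (by linarith)] at h1
  have habs_pos : ∀ y : ℝ, 0 < ‖(x:ℂ) + (y:ℂ)*Complex.I‖ := by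
    intro y
    rw [l_abs]
    have : |x| ≤ Real.sqrt (x^2+y^2) := by
      rw [← Real.sqrt_sq_eq_abs]
      exact Real.sqrt_le_sqrt (by linarith only [sq_nonneg y])
    linarith only [this, hx0]
  have hlog_ge : ∀ y : ℝ, |y| ≤ δ →
      (4:ℝ) ≤ Real.log (1 / ‖(x:ℂ) + (y:ℂ)*Complex.I‖) := by
    intro y hy
    rw [one_div, Real.log_inv]
    have h1 : Real.log (‖(x:ℂ) + (y:ℂ)*Complex.I‖) ≤ Real.log (Real.exp (-4)) :=
      Real.log_le_log (habs_pos y) (le_trans (habs_le y hy) h2δ4)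
    rw [Real.log_exp] at h1
    linarith only [h1]
  -- Lipschitz facts
  have hz1 : ∀ y : ℝ, |y| ≤ δ → ‖(x:ℂ) + (y:ℂ)*Complex.I‖ ≤ 1 :=
    fun y hy => le_trans (habs_le y hy) hδ1
  have hFy : ∀ y : ℝ, |y| ≤ δ → |F ((x:ℂ) + (y:ℂ)*Complex.I) - F (x:ℂ)| ≤ |y| := by
    intro y hy
    have hx1 : ‖(x:ℂ)‖ ≤ 1 := by
      rw [Complex.norm_real, Real.norm_eq_abs]; linarith
    have := hLip _ _ (hz1 y hy) hx1
    have heq : ((x:ℂ) + (y:ℂ)*Complex.I) - (x:ℂ) = (y:ℂ)*Complex.I := by ring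
    rwa [heq, norm_mul, Complex.norm_I, Complex.norm_real, Real.norm_eq_abs, mul_one] at this
  have hFδ2 : ∀ y : ℝ, |y| ≤ δ → |F ((x:ℂ) + (y:ℂ)*Complex.I)| ≤ δ^2 :=
    fun y hy => hF2 _ (hz1 y hy)
  have hFF : ∀ y₁ y₂ : ℝ, |y₁| ≤ δ → |y₂| ≤ δ →
      |F ((x:ℂ) + (y₁:ℂ)*Complex.I) - F ((x:ℂ) + (y₂:ℂ)*Complex.I)| ≤ |y₁ - y₂| := by
    intro y₁ y₂ h1 h2
    have := hLip _ _ (hz1 y₁ h1) (hz1 y₂ h2)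
    have heq : ((x:ℂ) + (y₁:ℂ)*Complex.I) - ((x:ℂ) + (y₂:ℂ)*Complex.I)
        = ((y₁ - y₂ : ℝ):ℂ)*Complex.I := by push_cast; ring
    rwa [heq, norm_mul, Complex.norm_I, Complex.norm_real, Real.norm_eq_abs, mul_one] at this
  -- the function g
  set g : ℝ → ℝ := fun y =>
    y * Real.log (1 / ‖(x:ℂ) + (y:ℂ)*Complex.I‖) - F ((x:ℂ) + (y:ℂ)*Complex.I)
    with hgdef
  have hg_eq : ∀ y : ℝ, g y = (y * -(Real.log (x^2+y^2)/2) - 2*y) + 2*y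
      - F ((x:ℂ) + (y:ℂ)*Complex.I) := by
    intro y; rw [hgdef]; simp only [l_log]; ring
  -- strict monotonicity of g
  have hgmono : StrictMonoOn g (Set.Icc (-δ) δ) := by
    intro y₁ h1 y₂ h2 h12
    have hy1 : |y₁| ≤ δ := abs_le.mpr ⟨h1.1, h1.2⟩
    have hy2 : |y₂| ≤ δ := abs_le.mpr ⟨h2.1, h2.2⟩
    have hxδ' : |x| ≤ Real.exp (-5) := by rw [← hδdef]; exact hxδ
    have h1' : y₁ ∈ Set.Icc (-Real.exp (-5)) (Real.exp (-5)) := by rw [← hδdef]; exact h1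
    have h2' : y₂ ∈ Set.Icc (-Real.exp (-5)) (Real.exp (-5)) := by rw [← hδdef]; exact h2
    have hφ := (l_mono x hxne hxδ') h1' h2' h12
    have hF := hFF y₂ y₁ hy2 hy1
    have habs12 : |y₂ - y₁| = y₂ - y₁ := abs_of_pos (by linarith)
    rw [habs12, abs_le] at hF
    rw [hg_eq y₁, hg_eq y₂]
    dsimp only at hφ
    linarith only [hφ, hF.2, h12]
  -- continuity of g
  have hφcont : Continuous (fun y : ℝ => y * -(Real.log (x^2+y^2)/2) - 2*y) :=
    continuous_iff_continuousAt.mpr fun y => (l_deriv x hxne y).continuousAt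
  have hFcont : ContinuousOn (fun y : ℝ => F ((x:ℂ)+(y:ℂ)*Complex.I)) (Set.Icc (-δ) δ) := by
    have hLOW : LipschitzOnWith 1 F (Metric.closedBall (0:ℂ) 1) := by
      rw [lipschitzOnWith_iff_dist_le_mul]
      intro μ hμ μ' hμ'
      rw [Metric.mem_closedBall, Complex.dist_eq, sub_zero] at hμ hμ'
      rw [Real.dist_eq, Complex.dist_eq]
      simpa using hLip μ μ' hμ hμ'
    have hmc : Continuous (fun y : ℝ => (x:ℂ) + (y:ℂ)*Complex.I) := by continuity
    apply hLOW.continuousOn.comp hmc.continuousOn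
    intro y hy
    rw [Set.mem_Icc] at hy
    rw [Metric.mem_closedBall, Complex.dist_eq, sub_zero]
    exact hz1 y (abs_le.mpr hy)
  have hgcont : ContinuousOn g (Set.Icc (-δ) δ) := by
    have h1 : (fun y : ℝ => y * Real.log (1 / ‖(x:ℂ)+(y:ℂ)*Complex.I‖))
        = fun y => (y * -(Real.log (x^2+y^2)/2) - 2*y) + 2*y := by
      funext y; rw [l_log]; ring
    have h2 : ContinuousOn
        (fun y : ℝ => y * Real.log (1 / ‖(x:ℂ)+(y:ℂ)*Complex.I‖))
        (Set.Icc (-δ) δ) := by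
      rw [h1]; exact (hφcont.add (by continuity)).continuousOn
    exact h2.sub hFcont
  -- endpoint values
  have hδabs : |δ| ≤ δ := le_of_eq (abs_of_pos hδpos)
  have hnδabs : |(-δ)| ≤ δ := by rw [abs_neg]; exact hδabs
  have hδsq : δ^2 ≤ δ/2 := by nlinarith only [hδ1, hδpos]
  have hgδpos : 0 < g δ := by
    have h4 := hlog_ge δ hδabs
    have hFb := abs_le.mp (hFδ2 δ hδabs)
    have : δ * 4 ≤ δ * Real.log (1 / ‖(x:ℂ)+(δ:ℂ)*Complex.I‖) :=
      mul_le_mul_of_nonneg_left h4 hδpos.le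
    rw [hgdef]
    dsimp only
    linarith only [this, hFb.2, hδsq, hδpos]
  have hgδneg : g (-δ) < 0 := by
    have h4 := hlog_ge (-δ) hnδabs
    have hFb := abs_le.mp (hFδ2 (-δ) hnδabs)
    have : δ * 4 ≤ δ * Real.log (1 / ‖(x:ℂ)+((-δ:ℝ):ℂ)*Complex.I‖) :=
      mul_le_mul_of_nonneg_left h4 hδpos.le
    rw [hgdef]
    dsimp only
    linarith only [this, hFb.1, hδsq, hδpos]
  obtain ⟨y₀, hy₀mem, hy₀⟩ :=
    intermediate_value_Icc (by linarith : -δ ≤ δ) hgcont ⟨hgδneg.le, hgδpos.le⟩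
  constructor
  · refine ⟨y₀, ⟨hy₀mem, ?_⟩, ?_⟩
    · have : g y₀ = 0 := hy₀
      rw [hgdef] at this
      dsimp only at this
      linarith
    · rintro y' ⟨hy'mem, hy'eq⟩
      apply hgmono.injOn hy'mem hy₀mem
      have h1 : g y' = 0 := by rw [hgdef]; dsimp only; linarith
      rw [h1, hy₀]
  -- quantitative part
  clear hgmono hgcont hφcont hFcont hg_eq hgδpos hgδneg hδabs hnδabs hδsq hFF hy₀ hy₀mem y₀ hgdef g
  intro hK y hymem heq
  have hy_abs : |y| ≤ δ := abs_le.mpr ⟨hymem.1, hymem.2⟩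
  have h4h : (4:ℝ) ≤ Real.log (1 / ‖(x:ℂ)+(y:ℂ)*Complex.I‖) := hlog_ge y hy_abs
  have hFzF0 : |F ((x:ℂ)+(y:ℂ)*Complex.I) - F (x:ℂ)| ≤ |y| := hFy y hy_abs
  set A := ‖(x:ℂ)+(y:ℂ)*Complex.I‖ with hAdef
  set Fz := F ((x:ℂ)+(y:ℂ)*Complex.I) with hFzdef
  set F0 := F (x:ℂ) with hF0def
  set h := Real.log (1/A) with hhdef
  set L := Real.log (1/F0) with hLdef
  have hApos : 0 < A := habs_pos y
  -- basic bounds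
  have hlog5 : (5:ℝ) ≤ Real.log (1/|x|) := by
    have h1 : Real.log |x| ≤ Real.log (Real.exp (-5)) :=
      Real.log_le_log hx0 (hδdef ▸ hxδ)
    rw [Real.log_exp] at h1
    rw [one_div, Real.log_inv]
    linarith only [h1]
  have hF0lb : 5*|x| ≤ F0 := by
    have := mul_le_mul_of_nonneg_left hlog5 (abs_nonneg x)
    linarith only [this, hK]
  have hF0pos : 0 < F0 := lt_of_lt_of_le (by linarith : (0:ℝ) < 5*|x|) hF0lb
  have hF0ub : F0 ≤ Real.exp (-10) := by
    have h1 := abs_le.mp (hF2 (x:ℂ) (by rw [Complex.norm_real, Real.norm_eq_abs]; linarith))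
    have h2 : δ^2 = Real.exp (-10) := by
      rw [hδdef, sq, ← Real.exp_add]; norm_num
    rw [← hF0def] at h1
    linarith [h1.2, h2.le, h2.ge]
  have hL10 : (10:ℝ) ≤ L := by
    have h1 : Real.log F0 ≤ Real.log (Real.exp (-10)) := Real.log_le_log hF0pos hF0ub
    rw [Real.log_exp] at h1
    rw [hLdef, one_div, Real.log_inv]
    linarith only [h1]
  have hL0 : (0:ℝ) < L := by linarith
  have hlogL2 : (2:ℝ) ≤ Real.log L := by
    have hexp2 : Real.exp 2 ≤ 10 := by
      have h22 : Real.exp 2 = Real.exp 1 * Real.exp 1 := by rw [← Real.exp_add]; norm_num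
      nlinarith only [Real.exp_one_lt_d9, Real.exp_pos 1, h22]
    calc (2:ℝ) = Real.log (Real.exp 2) := (Real.log_exp 2).symm
      _ ≤ Real.log L := Real.log_le_log (Real.exp_pos 2) (by linarith)
  have hlogL0 : (0:ℝ) ≤ Real.log L := by linarith
  -- equation facts
  have heq' : y * h = Fz := heq
  have habs12 := abs_le.mp hFzF0
  have hyh_ub : |y| * h ≤ F0 + |y| := by
    have h1 : |Fz| ≤ F0 + |y| := by
      have h2 := abs_sub_abs_le_abs_sub Fz F0
      rw [abs_of_pos hF0pos] at h2
      linarith only [h2, hFzF0]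
    have h3 : |y| * h = |Fz| := by
      rw [← heq', abs_mul, abs_of_pos (by linarith only [h4h] : (0:ℝ) < h)]
    linarith only [h1, h3]
  have hy3 : 3*|y| ≤ F0 := by nlinarith only [hyh_ub, h4h, abs_nonneg y]
  have hFzpos : 0 < Fz := by linarith only [habs12.1, hy3, hF0pos, abs_nonneg y]
  have hypos : 0 < y := by
    by_contra hc
    push_neg at hc
    linarith only [mul_nonpos_of_nonpos_of_nonneg hc (by linarith only [h4h] : (0:ℝ) ≤ h),
      heq', hFzpos]
  have hyabs : |y| = y := abs_of_pos hypos
  rw [hyabs] at hy3 hyh_ub habs12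
  -- A ≤ F0 hence L ≤ h
  have hAxy : A ≤ |x| + y := by
    rw [hAdef, l_abs]
    have h1 : Real.sqrt (x^2+y^2) ≤ Real.sqrt ((|x|+y)^2) := by
      apply Real.sqrt_le_sqrt
      nlinarith only [abs_nonneg x, hypos.le, sq_abs x]
    rwa [Real.sqrt_sq (by nlinarith [abs_nonneg x, hypos.le] : (0:ℝ) ≤ |x| + y)] at h1
  have hAF0 : A ≤ F0 := by linarith only [hAxy, hF0lb, hy3, hF0pos]
  have hLh : L ≤ h := by
    have h1 : Real.log A ≤ Real.log F0 := Real.log_le_log hApos hAF0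
    rw [hhdef, hLdef, one_div, one_div, Real.log_inv, Real.log_inv]
    linarith only [h1]
  have hhpos : (0:ℝ) < h := by linarith
  -- upper bound on h
  have hAy : y ≤ A := by
    rw [hAdef, l_abs]
    calc y ≤ |y| := le_abs_self y
      _ = Real.sqrt (y^2) := (Real.sqrt_sq_eq_abs y).symm
      _ ≤ Real.sqrt (x^2+y^2) := Real.sqrt_le_sqrt (by linarith only [sq_nonneg x])
  have hF02yh : F0 ≤ 2*y*h := by nlinarith only [habs12, heq', hypos.le, h4h]
  have hself : h ≤ Real.log 2 + Real.log h + L := by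
    have h1 : Real.log y ≤ Real.log A := Real.log_le_log hypos hAy
    have h2 : (1:ℝ)/y ≤ 2*h/F0 := by
      rw [div_le_div_iff₀ hypos hF0pos]
      nlinarith only [hF02yh]
    have h3 : Real.log (1/y) ≤ Real.log (2*h/F0) :=
      Real.log_le_log (one_div_pos.mpr hypos) h2
    have h4 : Real.log (2*h/F0) = Real.log 2 + Real.log h - Real.log F0 := by
      rw [Real.log_div (ne_of_gt (by linarith : (0:ℝ) < 2*h)) hF0pos.ne',
        Real.log_mul two_ne_zero hhpos.ne']
    have h5 : Real.log (1/y) = -Real.log y := by rw [one_div, Real.log_inv]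
    have h6 : h ≤ -Real.log y := by
      rw [hhdef, one_div, Real.log_inv]
      linarith only [h1]
    have h7 : L = -Real.log F0 := by rw [hLdef, one_div, Real.log_inv]
    linarith only [h3, h4, h5, h6, h7]
  have hlog2 : Real.log 2 < 0.6931471808 := Real.log_two_lt_d9
  have h2L : h ≤ 2*L := by
    by_contra hc
    push_neg at hc
    have h20 : (20:ℝ) < h := by linarith
    have l8 : Real.log (h/8) ≤ h/8 - 1 := Real.log_le_sub_one_of_pos (by linarith)
    have e8 : Real.log h = Real.log (h/8) + Real.log 8 := by
      rw [Real.log_div (by linarith) (by norm_num)]; ring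
    have l82 : Real.log 8 = 3 * Real.log 2 := by
      rw [show (8:ℝ) = 2^3 by norm_num, Real.log_pow]; push_cast; ring
    linarith only [hself, l8, e8, l82, hlog2, hc, h20]
  have hhub : h ≤ L + 2*Real.log L := by
    have h1 : Real.log h ≤ Real.log (2*L) := Real.log_le_log hhpos h2L
    have h2 : Real.log (2*L) = Real.log 2 + Real.log L := Real.log_mul two_ne_zero hL0.ne'
    linarith only [hself, h1, h2, hlog2, hlogL2]
  -- final bound
  have hL2pos : (0:ℝ) < L^2 := pow_pos hL0 2
  have hyL : y*L ≤ F0 + y := by nlinarith only [hyh_ub, hLh, hypos.le]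
  rw [abs_le]
  constructor
  · have hlow : F0/L - y ≤ 4 * F0 * Real.log L / L^2 := by
      rw [le_div_iff₀ hL2pos]
      have hexp : (F0/L - y) * L^2 = F0*L - y*L^2 := by field_simp
      rw [hexp]
      have hF0yh : F0 ≤ y*h + y := by linarith
      have hyh2 : y*h ≤ y*(L + 2*Real.log L) := mul_le_mul_of_nonneg_left hhub hypos.le
      have hF0y : F0 ≤ y*L + 2*y*Real.log L + y := by linarith only [hF0yh, hyh2]
      have hF0yL : F0*L ≤ (y*L + 2*y*Real.log L + y)*L :=
        mul_le_mul_of_nonneg_right hF0y hL0.le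
      have hA1 : y*L*Real.log L ≤ (F0+y)*Real.log L :=
        mul_le_mul_of_nonneg_right hyL hlogL0
      have hB1 : 3*y*Real.log L ≤ F0*Real.log L :=
        mul_le_mul_of_nonneg_right hy3 hlogL0
      have hC1 : F0*2 ≤ F0*Real.log L := mul_le_mul_of_nonneg_left hlogL2 hF0pos.le
      linarith only [hF0yL, hA1, hB1, hC1, hyL, hy3, hF0pos]
    linarith only [hlow]
  · rw [le_div_iff₀ hL2pos]
    have hexp : (y - F0/L) * L^2 = y*L^2 - F0*L := by field_simp
    rw [hexp]
    have hyL2 : y*L*L ≤ (F0+y)*L := mul_le_mul_of_nonneg_right hyL hL0.le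
    have hC1 : F0*2 ≤ F0*Real.log L := mul_le_mul_of_nonneg_left hlogL2 hF0pos.le
    linarith only [hyL2, hyL, hy3, hC1, hF0pos]
end

section
/- Let a, b, c ∈ ℝ and define q(x₁, x₂) = (2/3)·a·(x₁⁴ + x₂⁴) + b·x₁²x₂² + (2/3)·c·(x₁³x₂ + x₁x₂³). Then for every ζ = (ζ₁, ζ₂) ∈ ℂ² with |ζ₁|² + |ζ₂|² = 1 one has (1/(2π))·∫₀^{2π} q(√2·Re(e^{−it}ζ₁), √2·Re(e^{−it}ζ₂)) dt = a + (b/2 − 2a)·|ζ₁|²·|ζ₂|² + b·(Re(ζ₁·conj(ζ₂)))² + c·Re(ζ₁·conj(ζ₂)). -/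
open Real

set_option maxHeartbeats 2000000

private lemma hasDerivAt_F (α β₁ β₂ β₄ β₅ t : ℝ) :
    HasDerivAt (fun t : ℝ => α * t + (β₁ * (Real.sin t * Real.cos t ^ 3)
        + (β₂ * (Real.sin t ^ 3 * Real.cos t) + (β₄ * Real.cos t ^ 4 + β₅ * Real.sin t ^ 4))))
      (α + (β₁ * (Real.cos t ^ 4 - 3 * Real.sin t ^ 2 * Real.cos t ^ 2)
        + (β₂ * (3 * Real.sin t ^ 2 * Real.cos t ^ 2 - Real.sin t ^ 4)
          + (β₄ * (-4 * Real.cos t ^ 3 * Real.sin t) + β₅ * (4 * Real.sin t ^ 3 * Real.cos t))))) t := by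
  have hs := Real.hasDerivAt_sin t
  have hc := Real.hasDerivAt_cos t
  have H := (((hasDerivAt_id t).const_mul α).add
    (((hs.mul (hc.pow 3)).const_mul β₁).add
    ((((hs.pow 3).mul hc).const_mul β₂).add
    (((hc.pow 4).const_mul β₄).add ((hs.pow 4).const_mul β₅)))))
  refine H.congr_deriv ?_
  simp only [Pi.pow_apply, Nat.cast_ofNat]
  ring

private lemma avg_aux (a b c u₁ v₁ u₂ v₂ : ℝ) :
    ∫ t in (0:ℝ)..(2 * Real.pi),
      (2 / 3 * a * ((Real.sqrt 2 * (Real.cos t * u₁ + Real.sin t * v₁)) ^ 4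
          + (Real.sqrt 2 * (Real.cos t * u₂ + Real.sin t * v₂)) ^ 4)
        + b * (Real.sqrt 2 * (Real.cos t * u₁ + Real.sin t * v₁)) ^ 2
            * (Real.sqrt 2 * (Real.cos t * u₂ + Real.sin t * v₂)) ^ 2
        + 2 / 3 * c * ((Real.sqrt 2 * (Real.cos t * u₁ + Real.sin t * v₁)) ^ 3
            * (Real.sqrt 2 * (Real.cos t * u₂ + Real.sin t * v₂))
          + (Real.sqrt 2 * (Real.cos t * u₁ + Real.sin t * v₁))
            * (Real.sqrt 2 * (Real.cos t * u₂ + Real.sin t * v₂)) ^ 3))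
    = 2 * Real.pi * ((1)*c*v₁*v₂^3 + (1)*c*v₁*u₂^2*v₂ + (1)*c*v₁^3*v₂ + (1)*c*u₁*u₂*v₂^2 + (1)*c*u₁*u₂^3 + (1)*c*u₁*v₁^2*u₂ + (1)*c*u₁^2*v₁*v₂ + (1)*c*u₁^3*u₂ + (3/2)*b*v₁^2*v₂^2 + (1/2)*b*v₁^2*u₂^2 + (2)*b*u₁*v₁*u₂*v₂ + (1/2)*b*u₁^2*v₂^2 + (3/2)*b*u₁^2*u₂^2 + (1)*a*v₂^4 + (2)*a*u₂^2*v₂^2 + (1)*a*u₂^4 + (1)*a*v₁^4 + (2)*a*u₁^2*v₁^2 + (1)*a*u₁^4) := by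
  have h2 : Real.sqrt 2 ^ 2 = 2 := Real.sq_sqrt (by norm_num)
  have key : ∀ t ∈ Set.uIcc (0:ℝ) (2 * Real.pi),
      HasDerivAt (fun t : ℝ => ((1)*c*v₁*v₂^3 + (1)*c*v₁*u₂^2*v₂ + (1)*c*v₁^3*v₂ + (1)*c*u₁*u₂*v₂^2 + (1)*c*u₁*u₂^3 + (1)*c*u₁*v₁^2*u₂ + (1)*c*u₁^2*v₁*v₂ + (1)*c*u₁^3*u₂ + (3/2)*b*v₁^2*v₂^2 + (1/2)*b*v₁^2*u₂^2 + (2)*b*u₁*v₁*u₂*v₂ + (1/2)*b*u₁^2*v₂^2 + (3/2)*b*u₁^2*u₂^2 + (1)*a*v₂^4 + (2)*a*u₂^2*v₂^2 + (1)*a*u₂^4 + (1)*a*v₁^4 + (2)*a*u₁^2*v₁^2 + (1)*a*u₁^4) * t + (((-1)*c*v₁*v₂^3 + (-1)*c*v₁*u₂^2*v₂ + (-1)*c*v₁^3*v₂ + (-1)*c*u₁*u₂*v₂^2 + (5/3)*c*u₁*u₂^3 + (-1)*c*u₁*v₁^2*u₂ + (-1)*c*u₁^2*v₁*v₂ + (5/3)*c*u₁^3*u₂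 + (-3/2)*b*v₁^2*v₂^2 + (-1/2)*b*v₁^2*u₂^2 + (-2)*b*u₁*v₁*u₂*v₂ + (-1/2)*b*u₁^2*v₂^2 + (5/2)*b*u₁^2*u₂^2 + (-1)*a*v₂^4 + (-2)*a*u₂^2*v₂^2 + (5/3)*a*u₂^4 + (-1)*a*v₁^4 + (-2)*a*u₁^2*v₁^2 + (5/3)*a*u₁^4) * (Real.sin t * Real.cos t ^ 3)
        + (((-5/3)*c*v₁*v₂^3 + (1)*c*v₁*u₂^2*v₂ + (-5/3)*c*v₁^3*v₂ + (1)*c*u₁*u₂*v₂^2 + (1)*c*u₁*u₂^3 + (1)*c*u₁*v₁^2*u₂ + (1)*c*u₁^2*v₁*v₂ + (1)*c*u₁^3*u₂ + (-5/2)*b*v₁^2*v₂^2 + (1/2)*b*v₁^2*u₂^2 + (2)*b*u₁*v₁*u₂*v₂ + (1/2)*b*u₁^2*v₂^2 + (3/2)*b*u₁^2*u₂^2 + (-5/3)*a*v₂^4 + (2)*a*u₂^2*v₂^2 + (1)*a*u₂^4 + (-5/3)*a*v₁^4 + (2)*a*u₁^2*v₁^2 + (1)*a*u₁^4) * (Real.sin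 t ^ 3 * Real.cos t)
          + (((-2/3)*c*v₁*u₂^3 + (-2)*c*u₁*u₂^2*v₂ + (-2)*c*u₁^2*v₁*u₂ + (-2/3)*c*u₁^3*v₂ + (-2)*b*u₁*v₁*u₂^2 + (-2)*b*u₁^2*u₂*v₂ + (-8/3)*a*u₂^3*v₂ + (-8/3)*a*u₁^3*v₁) * Real.cos t ^ 4 + ((2)*c*v₁*u₂*v₂^2 + (2/3)*c*v₁^3*u₂ + (2/3)*c*u₁*v₂^3 + (2)*c*u₁*v₁^2*v₂ + (2)*b*v₁^2*u₂*v₂ + (2)*b*u₁*v₁*v₂^2 + (8/3)*a*u₂*v₂^3 + (8/3)*a*u₁*v₁^3) * Real.sin t ^ 4))))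
      (2 / 3 * a * ((Real.sqrt 2 * (Real.cos t * u₁ + Real.sin t * v₁)) ^ 4
          + (Real.sqrt 2 * (Real.cos t * u₂ + Real.sin t * v₂)) ^ 4)
        + b * (Real.sqrt 2 * (Real.cos t * u₁ + Real.sin t * v₁)) ^ 2
            * (Real.sqrt 2 * (Real.cos t * u₂ + Real.sin t * v₂)) ^ 2
        + 2 / 3 * c * ((Real.sqrt 2 * (Real.cos t * u₁ + Real.sin t * v₁)) ^ 3
            * (Real.sqrt 2 * (Real.cos t * u₂ + Real.sin t * v₂))
          + (Real.sqrt 2 * (Real.cos t * u₁ + Real.sin t * v₁))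
            * (Real.sqrt 2 * (Real.cos t * u₂ + Real.sin t * v₂)) ^ 3)) t := by
    intro t _
    have H := hasDerivAt_F ((1)*c*v₁*v₂^3 + (1)*c*v₁*u₂^2*v₂ + (1)*c*v₁^3*v₂ + (1)*c*u₁*u₂*v₂^2 + (1)*c*u₁*u₂^3 + (1)*c*u₁*v₁^2*u₂ + (1)*c*u₁^2*v₁*v₂ + (1)*c*u₁^3*u₂ + (3/2)*b*v₁^2*v₂^2 + (1/2)*b*v₁^2*u₂^2 + (2)*b*u₁*v₁*u₂*v₂ + (1/2)*b*u₁^2*v₂^2 + (3/2)*b*u₁^2*u₂^2 + (1)*a*v₂^4 + (2)*a*u₂^2*v₂^2 + (1)*a*u₂^4 + (1)*a*v₁^4 + (2)*a*u₁^2*v₁^2 + (1)*a*u₁^4) ((-1)*c*v₁*v₂^3 + (-1)*c*v₁*u₂^2*v₂ + (-1)*c*v₁^3*v₂ + (-1)*c*u₁*u₂*v₂^2 + (5/3)*c*u₁*u₂^3 + (-1)*c*u₁*v₁^2*u₂ + (-1)*c*u₁^2*v₁*v₂ + (5/3)*c*u₁^3*u₂ + (-3/2)*b*v₁^2*v₂^2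 + (-1/2)*b*v₁^2*u₂^2 + (-2)*b*u₁*v₁*u₂*v₂ + (-1/2)*b*u₁^2*v₂^2 + (5/2)*b*u₁^2*u₂^2 + (-1)*a*v₂^4 + (-2)*a*u₂^2*v₂^2 + (5/3)*a*u₂^4 + (-1)*a*v₁^4 + (-2)*a*u₁^2*v₁^2 + (5/3)*a*u₁^4) ((-5/3)*c*v₁*v₂^3 + (1)*c*v₁*u₂^2*v₂ + (-5/3)*c*v₁^3*v₂ + (1)*c*u₁*u₂*v₂^2 + (1)*c*u₁*u₂^3 + (1)*c*u₁*v₁^2*u₂ + (1)*c*u₁^2*v₁*v₂ + (1)*c*u₁^3*u₂ + (-5/2)*b*v₁^2*v₂^2 + (1/2)*b*v₁^2*u₂^2 + (2)*b*u₁*v₁*u₂*v₂ + (1/2)*b*u₁^2*v₂^2 + (3/2)*b*u₁^2*u₂^2 + (-5/3)*a*v₂^4 + (2)*a*u₂^2*v₂^2 + (1)*a*u₂^4 + (-5/3)*a*v₁^4 + (2)*a*u₁^2*v₁^2 + (1)*a*u₁^4) ((-2/3)*c*v₁*u₂^3 + (-2)*c*u₁*u₂^2*v₂ + (-2)*c*u₁^2*v₁*u₂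 + (-2/3)*c*u₁^3*v₂ + (-2)*b*u₁*v₁*u₂^2 + (-2)*b*u₁^2*u₂*v₂ + (-8/3)*a*u₂^3*v₂ + (-8/3)*a*u₁^3*v₁) ((2)*c*v₁*u₂*v₂^2 + (2/3)*c*v₁^3*u₂ + (2/3)*c*u₁*v₂^3 + (2)*c*u₁*v₁^2*v₂ + (2)*b*v₁^2*u₂*v₂ + (2)*b*u₁*v₁*v₂^2 + (8/3)*a*u₂*v₂^3 + (8/3)*a*u₁*v₁^3) t
    have hsc := Real.sin_sq_add_cos_sq t
    have hval : (2 / 3 * a * ((Real.sqrt 2 * (Real.cos t * u₁ + Real.sin t * v₁)) ^ 4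
          + (Real.sqrt 2 * (Real.cos t * u₂ + Real.sin t * v₂)) ^ 4)
        + b * (Real.sqrt 2 * (Real.cos t * u₁ + Real.sin t * v₁)) ^ 2
            * (Real.sqrt 2 * (Real.cos t * u₂ + Real.sin t * v₂)) ^ 2
        + 2 / 3 * c * ((Real.sqrt 2 * (Real.cos t * u₁ + Real.sin t * v₁)) ^ 3
            * (Real.sqrt 2 * (Real.cos t * u₂ + Real.sin t * v₂))
          + (Real.sqrt 2 * (Real.cos t * u₁ + Real.sin t * v₁))
            * (Real.sqrt 2 * (Real.cos t * u₂ + Real.sin t * v₂)) ^ 3))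
      = (((1)*c*v₁*v₂^3 + (1)*c*v₁*u₂^2*v₂ + (1)*c*v₁^3*v₂ + (1)*c*u₁*u₂*v₂^2 + (1)*c*u₁*u₂^3 + (1)*c*u₁*v₁^2*u₂ + (1)*c*u₁^2*v₁*v₂ + (1)*c*u₁^3*u₂ + (3/2)*b*v₁^2*v₂^2 + (1/2)*b*v₁^2*u₂^2 + (2)*b*u₁*v₁*u₂*v₂ + (1/2)*b*u₁^2*v₂^2 + (3/2)*b*u₁^2*u₂^2 + (1)*a*v₂^4 + (2)*a*u₂^2*v₂^2 + (1)*a*u₂^4 + (1)*a*v₁^4 + (2)*a*u₁^2*v₁^2 + (1)*a*u₁^4) + (((-1)*c*v₁*v₂^3 + (-1)*c*v₁*u₂^2*v₂ + (-1)*c*v₁^3*v₂ + (-1)*c*u₁*u₂*v₂^2 + (5/3)*c*u₁*u₂^3 + (-1)*c*u₁*v₁^2*u₂ + (-1)*c*u₁^2*v₁*v₂ + (5/3)*c*u₁^3*u₂ + (-3/2)*b*v₁^2*v₂^2 + (-1/2)*b*v₁^2*u₂^2 + (-2)*b*u₁*v₁*u₂*v₂ + (-1/2)*b*u₁^2*v₂^2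 + (5/2)*b*u₁^2*u₂^2 + (-1)*a*v₂^4 + (-2)*a*u₂^2*v₂^2 + (5/3)*a*u₂^4 + (-1)*a*v₁^4 + (-2)*a*u₁^2*v₁^2 + (5/3)*a*u₁^4) * (Real.cos t ^ 4 - 3 * Real.sin t ^ 2 * Real.cos t ^ 2)
        + (((-5/3)*c*v₁*v₂^3 + (1)*c*v₁*u₂^2*v₂ + (-5/3)*c*v₁^3*v₂ + (1)*c*u₁*u₂*v₂^2 + (1)*c*u₁*u₂^3 + (1)*c*u₁*v₁^2*u₂ + (1)*c*u₁^2*v₁*v₂ + (1)*c*u₁^3*u₂ + (-5/2)*b*v₁^2*v₂^2 + (1/2)*b*v₁^2*u₂^2 + (2)*b*u₁*v₁*u₂*v₂ + (1/2)*b*u₁^2*v₂^2 + (3/2)*b*u₁^2*u₂^2 + (-5/3)*a*v₂^4 + (2)*a*u₂^2*v₂^2 + (1)*a*u₂^4 + (-5/3)*a*v₁^4 + (2)*a*u₁^2*v₁^2 + (1)*a*u₁^4) * (3 * Real.sin t ^ 2 * Real.cos t ^ 2 - Real.sin t ^ 4)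
          + (((-2/3)*c*v₁*u₂^3 + (-2)*c*u₁*u₂^2*v₂ + (-2)*c*u₁^2*v₁*u₂ + (-2/3)*c*u₁^3*v₂ + (-2)*b*u₁*v₁*u₂^2 + (-2)*b*u₁^2*u₂*v₂ + (-8/3)*a*u₂^3*v₂ + (-8/3)*a*u₁^3*v₁) * (-4 * Real.cos t ^ 3 * Real.sin t)
            + ((2)*c*v₁*u₂*v₂^2 + (2/3)*c*v₁^3*u₂ + (2/3)*c*u₁*v₂^3 + (2)*c*u₁*v₁^2*v₂ + (2)*b*v₁^2*u₂*v₂ + (2)*b*u₁*v₁*v₂^2 + (8/3)*a*u₂*v₂^3 + (8/3)*a*u₁*v₁^3) * (4 * Real.sin t ^ 3 * Real.cos t))))) := by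
      linear_combination ((Real.sqrt 2 ^ 2 + 2) *
          (2 / 3 * a * ((Real.cos t * u₁ + Real.sin t * v₁) ^ 4
              + (Real.cos t * u₂ + Real.sin t * v₂) ^ 4)
            + b * (Real.cos t * u₁ + Real.sin t * v₁) ^ 2
                * (Real.cos t * u₂ + Real.sin t * v₂) ^ 2
            + 2 / 3 * c * ((Real.cos t * u₁ + Real.sin t * v₁) ^ 3
                * (Real.cos t * u₂ + Real.sin t * v₂)
              + (Real.cos t * u₁ + Real.sin t * v₁)
                * (Real.cos t * u₂ + Real.sin t * v₂) ^ 3))) * h2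
        + (((1)*c*v₁*v₂^3 + (1)*c*v₁*u₂^2*v₂ + (1)*c*v₁^3*v₂ + (1)*c*u₁*u₂*v₂^2 + (1)*c*u₁*u₂^3 + (1)*c*u₁*v₁^2*u₂ + (1)*c*u₁^2*v₁*v₂ + (1)*c*u₁^3*u₂ + (3/2)*b*v₁^2*v₂^2 + (1/2)*b*v₁^2*u₂^2 + (2)*b*u₁*v₁*u₂*v₂ + (1/2)*b*u₁^2*v₂^2 + (3/2)*b*u₁^2*u₂^2 + (1)*a*v₂^4 + (2)*a*u₂^2*v₂^2 + (1)*a*u₂^4 + (1)*a*v₁^4 + (2)*a*u₁^2*v₁^2 + (1)*a*u₁^4) * (Real.sin t ^ 2 + Real.cos t ^ 2 + 1)) * hsc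
    rw [hval]
    exact H
  have hint : IntervalIntegrable (fun t : ℝ =>
      2 / 3 * a * ((Real.sqrt 2 * (Real.cos t * u₁ + Real.sin t * v₁)) ^ 4
          + (Real.sqrt 2 * (Real.cos t * u₂ + Real.sin t * v₂)) ^ 4)
        + b * (Real.sqrt 2 * (Real.cos t * u₁ + Real.sin t * v₁)) ^ 2
            * (Real.sqrt 2 * (Real.cos t * u₂ + Real.sin t * v₂)) ^ 2
        + 2 / 3 * c * ((Real.sqrt 2 * (Real.cos t * u₁ + Real.sin t * v₁)) ^ 3
            * (Real.sqrt 2 * (Real.cos t * u₂ + Real.sin t * v₂))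
          + (Real.sqrt 2 * (Real.cos t * u₁ + Real.sin t * v₁))
            * (Real.sqrt 2 * (Real.cos t * u₂ + Real.sin t * v₂)) ^ 3))
      MeasureTheory.volume 0 (2 * Real.pi) := by
    apply Continuous.intervalIntegrable
    fun_prop
  rw [intervalIntegral.integral_eq_sub_of_hasDerivAt key hint]
  simp [Real.sin_two_pi, Real.cos_two_pi]
  ring

/-- Flow average of the quartic perturbation. -/
theorem stmt_13 (a b c : ℝ) (q : ℝ → ℝ → ℝ)
    (hq : ∀ x₁ x₂ : ℝ, q x₁ x₂ =
      2 / 3 * a * (x₁ ^ 4 + x₂ ^ 4) + b * x₁ ^ 2 * x₂ ^ 2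
        + 2 / 3 * c * (x₁ ^ 3 * x₂ + x₁ * x₂ ^ 3))
    (ζ₁ ζ₂ : ℂ) (hζ : ‖ζ₁‖ ^ 2 + ‖ζ₂‖ ^ 2 = 1) :
    (1 / (2 * Real.pi)) *
        ∫ t in (0:ℝ)..(2 * Real.pi),
          q (Real.sqrt 2 * (Complex.exp (-Complex.I * t) * ζ₁).re)
            (Real.sqrt 2 * (Complex.exp (-Complex.I * t) * ζ₂).re)
      = a + (b / 2 - 2 * a) * ‖ζ₁‖ ^ 2 * ‖ζ₂‖ ^ 2
        + b * ((ζ₁ * starRingEnd ℂ ζ₂).re) ^ 2 + c * (ζ₁ * starRingEnd ℂ ζ₂).re := by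
  have hre : ∀ (z : ℂ) (t : ℝ), (Complex.exp (-Complex.I * t) * z).re
      = Real.cos t * z.re + Real.sin t * z.im := by
    intro z t
    have h : -Complex.I * (t:ℂ) = ((-t : ℝ) : ℂ) * Complex.I := by push_cast; ring
    rw [h, Complex.exp_mul_I]
    simp [add_mul, Complex.mul_re, Complex.cos_ofReal_re, Complex.sin_ofReal_re,
      Complex.cos_ofReal_im, Complex.sin_ofReal_im, Real.cos_neg, Real.sin_neg]
  simp only [hq, hre]
  rw [avg_aux a b c ζ₁.re ζ₁.im ζ₂.re ζ₂.im]
  have hn : ζ₁.re * ζ₁.re + ζ₁.im * ζ₁.im + (ζ₂.re * ζ₂.re + ζ₂.im * ζ₂.im) = 1 := by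
    simpa [Complex.sq_norm, Complex.normSq_apply] using hζ
  simp only [Complex.sq_norm, Complex.normSq_apply, Complex.mul_re, Complex.conj_re,
    Complex.conj_im]
  have hπ : (2 * Real.pi) ≠ 0 := by positivity
  rw [show (1 : ℝ) / (2 * Real.pi) * (2 * Real.pi * ((1)*c*ζ₁.im*ζ₂.im^3 + (1)*c*ζ₁.im*ζ₂.re^2*ζ₂.im + (1)*c*ζ₁.im^3*ζ₂.im + (1)*c*ζ₁.re*ζ₂.re*ζ₂.im^2 + (1)*c*ζ₁.re*ζ₂.re^3 + (1)*c*ζ₁.re*ζ₁.im^2*ζ₂.re + (1)*c*ζ₁.re^2*ζ₁.im*ζ₂.im + (1)*c*ζ₁.re^3*ζ₂.re + (3/2)*b*ζ₁.im^2*ζ₂.im^2 + (1/2)*b*ζ₁.im^2*ζ₂.re^2 + (2)*b*ζ₁.re*ζ₁.im*ζ₂.re*ζ₂.im + (1/2)*b*ζ₁.re^2*ζ₂.im^2 + (3/2)*b*ζ₁.re^2*ζ₂.re^2 + (1)*a*ζ₂.im^4 + (2)*a*ζ₂.re^2*ζ₂.im^2 + (1)*a*ζ₂.re^4 + (1)*a*ζ₁.im^4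 + (2)*a*ζ₁.re^2*ζ₁.im^2 + (1)*a*ζ₁.re^4)) = ((1)*c*ζ₁.im*ζ₂.im^3 + (1)*c*ζ₁.im*ζ₂.re^2*ζ₂.im + (1)*c*ζ₁.im^3*ζ₂.im + (1)*c*ζ₁.re*ζ₂.re*ζ₂.im^2 + (1)*c*ζ₁.re*ζ₂.re^3 + (1)*c*ζ₁.re*ζ₁.im^2*ζ₂.re + (1)*c*ζ₁.re^2*ζ₁.im*ζ₂.im + (1)*c*ζ₁.re^3*ζ₂.re + (3/2)*b*ζ₁.im^2*ζ₂.im^2 + (1/2)*b*ζ₁.im^2*ζ₂.re^2 + (2)*b*ζ₁.re*ζ₁.im*ζ₂.re*ζ₂.im + (1/2)*b*ζ₁.re^2*ζ₂.im^2 + (3/2)*b*ζ₁.re^2*ζ₂.re^2 + (1)*a*ζ₂.im^4 + (2)*a*ζ₂.re^2*ζ₂.im^2 + (1)*a*ζ₂.re^4 + (1)*a*ζ₁.im^4 + (2)*a*ζ₁.re^2*ζ₁.im^2 + (1)*a*ζ₁.re^4) by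
    field_simp]
  linear_combination (a * (ζ₁.re * ζ₁.re + ζ₁.im * ζ₁.im + ζ₂.re * ζ₂.re + ζ₂.im * ζ₂.im + 1)
    + c * (ζ₁.re * ζ₂.re + ζ₁.im * ζ₂.im)) * hn
end

section
/- Let a, b, c ∈ ℝ with b/2 − 2a ≠ 0, and define Q : (0,1) × ℝ → ℝ by Q(ρ, θ) = a + (b/2 − 2a)·ρ(1−ρ) + b·ρ(1−ρ)·cos²θ + c·√(ρ(1−ρ))·cos θ. Then Q has no critical point (ρ, θ) with ρ ∈ (0,1), ρ ≠ 1/2 and sin θ ≠ 0; that is, at every such point not both partial derivatives ∂Q/∂ρ and ∂Q/∂θ vanish. -/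
/-- For `Q(ρ,θ) = a + (b/2 − 2a)ρ(1−ρ) + b ρ(1−ρ)cos²θ + c √(ρ(1−ρ)) cos θ` with
`b/2 − 2a ≠ 0`, there is no critical point `(ρ,θ)` with `ρ ∈ (0,1)`, `ρ ≠ 1/2`, `sin θ ≠ 0`:
the two partial derivatives of `Q` cannot both vanish at such a point. -/
theorem stmt_14 (a b c : ℝ) (hd : b / 2 - 2 * a ≠ 0) (Q : ℝ → ℝ → ℝ)
    (hQ : ∀ ρ θ : ℝ, Q ρ θ =
      a + (b / 2 - 2 * a) * (ρ * (1 - ρ)) + b * (ρ * (1 - ρ)) * Real.cos θ ^ 2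
        + c * Real.sqrt (ρ * (1 - ρ)) * Real.cos θ)
    (ρ θ : ℝ) (hρ : ρ ∈ Set.Ioo (0 : ℝ) 1) (hρ' : ρ ≠ 1 / 2) (hθ : Real.sin θ ≠ 0) :
    ¬(HasDerivAt (fun ρ' => Q ρ' θ) 0 ρ ∧ HasDerivAt (fun θ' => Q ρ θ') 0 θ) := by
  rintro ⟨h1, h2⟩
  obtain ⟨hρ0, hρ1⟩ := hρ
  have hp : 0 < ρ * (1 - ρ) := mul_pos hρ0 (by linarith)
  set s := Real.sqrt (ρ * (1 - ρ)) with hs_def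
  have hs : 0 < s := Real.sqrt_pos.mpr hp
  have hs2 : s ^ 2 = ρ * (1 - ρ) := Real.sq_sqrt hp.le
  -- derivative in ρ
  have hprod : HasDerivAt (fun x : ℝ => x * (1 - x)) (1 - 2 * ρ) ρ := by
    have h0 : HasDerivAt (fun x : ℝ => x - x ^ 2) (1 - 2 * ρ) ρ := by
      have := (hasDerivAt_id ρ).sub (hasDerivAt_pow 2 ρ)
      exact this.congr_deriv (by push_cast; ring)
    exact h0.congr_of_eventuallyEq (Filter.Eventually.of_forall fun x => by ring)
  have hsqrt : HasDerivAt (fun x : ℝ => Real.sqrt (x * (1 - x)))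
      (1 / (2 * s) * (1 - 2 * ρ)) ρ :=
    (Real.hasDerivAt_sqrt hp.ne').comp ρ hprod
  have hD1 : HasDerivAt (fun ρ' => Q ρ' θ)
      ((b / 2 - 2 * a) * (1 - 2 * ρ) + b * (1 - 2 * ρ) * Real.cos θ ^ 2
        + c * (1 / (2 * s) * (1 - 2 * ρ)) * Real.cos θ) ρ := by
    have : HasDerivAt (fun ρ' : ℝ =>
        a + (b / 2 - 2 * a) * (ρ' * (1 - ρ')) + b * (ρ' * (1 - ρ')) * Real.cos θ ^ 2
          + c * Real.sqrt (ρ' * (1 - ρ')) * Real.cos θ)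
        ((b / 2 - 2 * a) * (1 - 2 * ρ) + b * (1 - 2 * ρ) * Real.cos θ ^ 2
          + c * (1 / (2 * s) * (1 - 2 * ρ)) * Real.cos θ) ρ := by
      have h3 := (((hasDerivAt_const ρ a).add (hprod.const_mul (b / 2 - 2 * a))).add
        ((hprod.const_mul b).mul_const (Real.cos θ ^ 2))).add
        ((hsqrt.const_mul c).mul_const (Real.cos θ))
      exact h3.congr_deriv (by ring)
    exact this.congr_of_eventuallyEq (Filter.Eventually.of_forall fun x => (hQ x θ))
  have e1 : (b / 2 - 2 * a) * (1 - 2 * ρ) + b * (1 - 2 * ρ) * Real.cos θ ^ 2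
      + c * (1 / (2 * s) * (1 - 2 * ρ)) * Real.cos θ = 0 := hD1.unique h1
  -- derivative in θ
  have hD2 : HasDerivAt (fun θ' => Q ρ θ')
      (b * (ρ * (1 - ρ)) * (2 * Real.cos θ * (-Real.sin θ))
        + c * s * (-Real.sin θ)) θ := by
    have hcos : HasDerivAt Real.cos (-Real.sin θ) θ := Real.hasDerivAt_cos θ
    have : HasDerivAt (fun θ' : ℝ =>
        a + (b / 2 - 2 * a) * (ρ * (1 - ρ)) + b * (ρ * (1 - ρ)) * Real.cos θ' ^ 2
          + c * Real.sqrt (ρ * (1 - ρ)) * Real.cos θ')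
        (b * (ρ * (1 - ρ)) * (2 * Real.cos θ * (-Real.sin θ))
          + c * s * (-Real.sin θ)) θ := by
      have h4 := ((hasDerivAt_const θ (a + (b / 2 - 2 * a) * (ρ * (1 - ρ)))).add
        (((hcos.pow 2).const_mul (b * (ρ * (1 - ρ)))))).add
        (hcos.const_mul (c * s))
      exact h4.congr_deriv (by push_cast; ring)
    exact this.congr_of_eventuallyEq (Filter.Eventually.of_forall fun x => (hQ ρ x))
  have e2 : b * (ρ * (1 - ρ)) * (2 * Real.cos θ * (-Real.sin θ))
      + c * s * (-Real.sin θ) = 0 := hD2.unique h2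
  -- from e2: 2*b*s^2*cosθ + c*s = 0, so c = -2*b*s*cosθ
  have e2' : 2 * b * s ^ 2 * Real.cos θ + c * s = 0 := by
    have h : (-Real.sin θ) * (2 * b * s ^ 2 * Real.cos θ + c * s) = 0 := by
      linear_combination e2 - 2 * b * Real.sin θ * Real.cos θ * hs2
    rcases mul_eq_zero.mp h with h | h
    · exact absurd (by linarith : Real.sin θ = 0) hθ
    · exact h
  have hc : c = -(2 * b * s * Real.cos θ) := by
    have h : c * s = -(2 * b * s * Real.cos θ) * s := by linear_combination e2'
    exact mul_right_cancel₀ hs.ne' h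
  -- from e1, multiply by 2s
  have h12 : (1 - 2 * ρ) ≠ 0 := by
    intro h; apply hρ'; linarith
  have key : (b / 2 - 2 * a) + b * Real.cos θ ^ 2
      + c * (1 / (2 * s)) * Real.cos θ = 0 := by
    apply mul_left_cancel₀ h12
    linear_combination e1
  rw [hc] at key
  have hs' : s ≠ 0 := hs.ne'
  have hinv : 1 / (2 * s) * (2 * s) = 1 := by field_simp
  have hz : (b / 2 - 2 * a) * (2 * s) = 0 := by
    linear_combination (2 * s) * key + (2 * b * s * Real.cos θ ^ 2) * hinv
  rcases mul_eq_zero.mp hz with h | h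
  · exact hd h
  · linarith
end

section
/- Let q₁, q₂ : ℝ² × ℝ² → ℝ be continuously differentiable, and define C(q₁, q₂)(ρ) = (1/(2π))·∫₀^{2π} (s − π)·Cor(q₁, q₂; s)(ρ) ds for ρ ∈ ℝ² × ℝ². Then C(q₁, q₂)(ρ) = C(q₂, q₁)(ρ) for every ρ. -/
/-- The Hamilton flow of `p(x,ξ) = ½(x₁² + ξ₁² + x₂² + ξ₂²)` on `ℝ² × ℝ²`:
`Φ_s(x, ξ) = (x cos s + ξ sin s, −x sin s + ξ cos s)`. -/
noncomputable def oscFlow (s : ℝ) (p : (ℝ × ℝ) × (ℝ × ℝ)) : (ℝ × ℝ) × (ℝ × ℝ) :=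
  ((p.1.1 * Real.cos s + p.2.1 * Real.sin s, p.1.2 * Real.cos s + p.2.2 * Real.sin s),
    (-p.1.1 * Real.sin s + p.2.1 * Real.cos s, -p.1.2 * Real.sin s + p.2.2 * Real.cos s))

/-- The Poisson bracket `{f, g} = Σ_j (∂f/∂ξ_j ∂g/∂x_j − ∂f/∂x_j ∂g/∂ξ_j)` of two functions on
`(ℝ × ℝ) × (ℝ × ℝ)` with coordinates `((x₁, x₂), (ξ₁, ξ₂))`. -/
noncomputable def poissonBracket (f g : (ℝ × ℝ) × (ℝ × ℝ) → ℝ) (p : (ℝ × ℝ) × (ℝ × ℝ)) : ℝ :=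
    deriv (fun t => f (p.1, (t, p.2.2))) p.2.1 * deriv (fun t => g ((t, p.1.2), p.2)) p.1.1
  - deriv (fun t => f ((t, p.1.2), p.2)) p.1.1 * deriv (fun t => g (p.1, (t, p.2.2))) p.2.1
  + deriv (fun t => f (p.1, (p.2.1, t))) p.2.2 * deriv (fun t => g ((p.1.1, t), p.2)) p.1.2
  - deriv (fun t => f ((p.1.1, t), p.2)) p.1.2 * deriv (fun t => g (p.1, (p.2.1, t))) p.2.2

/-- The flow average `⟨F⟩(ρ) = (1/(2π)) ∫₀^{2π} F(Φ_t ρ) dt`. -/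
noncomputable def flowAvg (F : (ℝ × ℝ) × (ℝ × ℝ) → ℝ) (p : (ℝ × ℝ) × (ℝ × ℝ)) : ℝ :=
  (1 / (2 * Real.pi)) * ∫ t in (0:ℝ)..(2 * Real.pi), F (oscFlow t p)

/-- `Cor(q₁, q₂; s) = ⟨{q₁ ∘ Φ_s, q₂}⟩`. -/
noncomputable def corFn (q₁ q₂ : (ℝ × ℝ) × (ℝ × ℝ) → ℝ) (s : ℝ)
    (p : (ℝ × ℝ) × (ℝ × ℝ)) : ℝ :=
  flowAvg (poissonBracket (fun ρ => q₁ (oscFlow s ρ)) q₂) p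

abbrev EE := (ℝ × ℝ) × (ℝ × ℝ)


lemma oscFlow_comp (s t : ℝ) (p : EE) : oscFlow s (oscFlow t p) = oscFlow (s + t) p := by
  simp only [oscFlow, Prod.mk.injEq]
  refine ⟨⟨?_, ?_⟩, ?_, ?_⟩ <;> rw [Real.cos_add, Real.sin_add] <;> ring

lemma oscFlow_zero (p : EE) : oscFlow 0 p = p := by
  simp [oscFlow]

lemma oscFlow_inv (s : ℝ) (p : EE) : oscFlow (-s) (oscFlow s p) = p := by
  rw [oscFlow_comp, neg_add_cancel, oscFlow_zero]

lemma oscFlow_sub_period (s : ℝ) : oscFlow (s - 2 * Real.pi) = oscFlow s := by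
  funext p
  simp [oscFlow, Real.cos_sub_two_pi, Real.sin_sub_two_pi]

lemma oscFlow_period (s : ℝ) : oscFlow (s + 2 * Real.pi) = oscFlow s := by
  funext p
  simp [oscFlow, Real.cos_add_two_pi, Real.sin_add_two_pi]


section Slices

variable (q : EE → ℝ) (hq : Differentiable ℝ q) (s : ℝ) (p : EE)
include hq

-- ∂/∂x₁ of q ∘ Φ_s
lemma sliceA :
    deriv (fun t => q (oscFlow s ((t, p.1.2), p.2))) p.1.1
      = fderiv ℝ q (oscFlow s p) ((Real.cos s, 0), (-Real.sin s, 0)) := by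
  have hpath : HasDerivAt (fun t => oscFlow s ((t, p.1.2), p.2))
      ((Real.cos s, (0:ℝ)), (-Real.sin s, (0:ℝ))) p.1.1 := by
    simp only [oscFlow]
    refine HasDerivAt.prodMk (HasDerivAt.prodMk ?_ (hasDerivAt_const _ _))
      (HasDerivAt.prodMk ?_ (hasDerivAt_const _ _))
    · simpa using ((hasDerivAt_id p.1.1).mul_const (Real.cos s)).add_const (p.2.1 * Real.sin s)
    · have := (((hasDerivAt_id p.1.1).neg).mul_const (Real.sin s)).add_const (p.2.1 * Real.cos s)
      simpa using this
  have h0 : oscFlow s ((p.1.1, p.1.2), p.2) = oscFlow s p := by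
    simp [oscFlow]
  have := ((hq _).hasFDerivAt.comp_hasDerivAt p.1.1 hpath)
  rw [h0] at this
  exact this.deriv

-- ∂/∂x₂
lemma sliceB :
    deriv (fun t => q (oscFlow s ((p.1.1, t), p.2))) p.1.2
      = fderiv ℝ q (oscFlow s p) (((0:ℝ), Real.cos s), ((0:ℝ), -Real.sin s)) := by
  have hpath : HasDerivAt (fun t => oscFlow s ((p.1.1, t), p.2))
      (((0:ℝ), Real.cos s), ((0:ℝ), -Real.sin s)) p.1.2 := by
    simp only [oscFlow]
    refine HasDerivAt.prodMk (HasDerivAt.prodMk (hasDerivAt_const _ _) ?_)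
      (HasDerivAt.prodMk (hasDerivAt_const _ _) ?_)
    · simpa using ((hasDerivAt_id p.1.2).mul_const (Real.cos s)).add_const (p.2.2 * Real.sin s)
    · have := (((hasDerivAt_id p.1.2).neg).mul_const (Real.sin s)).add_const (p.2.2 * Real.cos s)
      simpa using this
  have h0 : oscFlow s ((p.1.1, p.1.2), p.2) = oscFlow s p := by
    simp [oscFlow]
  have := ((hq _).hasFDerivAt.comp_hasDerivAt p.1.2 hpath)
  rw [h0] at this
  exact this.deriv

-- ∂/∂ξ₁
lemma sliceC :
    deriv (fun t => q (oscFlow s (p.1, (t, p.2.2)))) p.2.1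
      = fderiv ℝ q (oscFlow s p) ((Real.sin s, 0), (Real.cos s, 0)) := by
  have hpath : HasDerivAt (fun t => oscFlow s (p.1, (t, p.2.2)))
      ((Real.sin s, (0:ℝ)), (Real.cos s, (0:ℝ))) p.2.1 := by
    simp only [oscFlow]
    refine HasDerivAt.prodMk (HasDerivAt.prodMk ?_ (hasDerivAt_const _ _))
      (HasDerivAt.prodMk ?_ (hasDerivAt_const _ _))
    · simpa using (((hasDerivAt_id p.2.1).mul_const (Real.sin s)).const_add (p.1.1 * Real.cos s))
    · simpa using (((hasDerivAt_id p.2.1).mul_const (Real.cos s)).const_add (-p.1.1 * Real.sin s))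
  have h0 : oscFlow s (p.1, (p.2.1, p.2.2)) = oscFlow s p := by
    simp [oscFlow]
  have := ((hq _).hasFDerivAt.comp_hasDerivAt p.2.1 hpath)
  rw [h0] at this
  exact this.deriv

-- ∂/∂ξ₂
lemma sliceD :
    deriv (fun t => q (oscFlow s (p.1, (p.2.1, t)))) p.2.2
      = fderiv ℝ q (oscFlow s p) (((0:ℝ), Real.sin s), ((0:ℝ), Real.cos s)) := by
  have hpath : HasDerivAt (fun t => oscFlow s (p.1, (p.2.1, t)))
      (((0:ℝ), Real.sin s), ((0:ℝ), Real.cos s)) p.2.2 := by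
    simp only [oscFlow]
    refine HasDerivAt.prodMk (HasDerivAt.prodMk (hasDerivAt_const _ _) ?_)
      (HasDerivAt.prodMk (hasDerivAt_const _ _) ?_)
    · simpa using (((hasDerivAt_id p.2.2).mul_const (Real.sin s)).const_add (p.1.2 * Real.cos s))
    · simpa using (((hasDerivAt_id p.2.2).mul_const (Real.cos s)).const_add (-p.1.2 * Real.sin s))
  have h0 : oscFlow s (p.1, (p.2.1, p.2.2)) = oscFlow s p := by
    simp [oscFlow]
  have := ((hq _).hasFDerivAt.comp_hasDerivAt p.2.2 hpath)
  rw [h0] at this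
  exact this.deriv

-- plain slices
lemma plainA :
    deriv (fun t => q ((t, p.1.2), p.2)) p.1.1
      = fderiv ℝ q p (((1:ℝ), 0), (0, 0)) := by
  have hpath : HasDerivAt (fun t : ℝ => (((t, p.1.2), p.2) : EE))
      (((1:ℝ), (0:ℝ)), ((0:ℝ), (0:ℝ))) p.1.1 :=
    HasDerivAt.prodMk (HasDerivAt.prodMk (hasDerivAt_id _) (hasDerivAt_const _ _))
      (HasDerivAt.prodMk (hasDerivAt_const _ _) (hasDerivAt_const _ _))
  have h0 : (((p.1.1, p.1.2), p.2) : EE) = p := by simp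
  have := ((hq _).hasFDerivAt.comp_hasDerivAt p.1.1 hpath)
  rw [h0] at this
  exact this.deriv

lemma plainB :
    deriv (fun t => q ((p.1.1, t), p.2)) p.1.2
      = fderiv ℝ q p (((0:ℝ), 1), (0, 0)) := by
  have hpath : HasDerivAt (fun t : ℝ => (((p.1.1, t), p.2) : EE))
      (((0:ℝ), (1:ℝ)), ((0:ℝ), (0:ℝ))) p.1.2 :=
    HasDerivAt.prodMk (HasDerivAt.prodMk (hasDerivAt_const _ _) (hasDerivAt_id _))
      (HasDerivAt.prodMk (hasDerivAt_const _ _) (hasDerivAt_const _ _))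
  have h0 : (((p.1.1, p.1.2), p.2) : EE) = p := by simp
  have := ((hq _).hasFDerivAt.comp_hasDerivAt p.1.2 hpath)
  rw [h0] at this
  exact this.deriv

lemma plainC :
    deriv (fun t => q (p.1, (t, p.2.2))) p.2.1
      = fderiv ℝ q p (((0:ℝ), 0), (1, 0)) := by
  have hpath : HasDerivAt (fun t : ℝ => ((p.1, (t, p.2.2)) : EE))
      (((0:ℝ), (0:ℝ)), ((1:ℝ), (0:ℝ))) p.2.1 :=
    HasDerivAt.prodMk (HasDerivAt.prodMk (hasDerivAt_const _ _) (hasDerivAt_const _ _))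
      (HasDerivAt.prodMk (hasDerivAt_id _) (hasDerivAt_const _ _))
  have h0 : ((p.1, (p.2.1, p.2.2)) : EE) = p := by simp
  have := ((hq _).hasFDerivAt.comp_hasDerivAt p.2.1 hpath)
  rw [h0] at this
  exact this.deriv

lemma plainD :
    deriv (fun t => q (p.1, (p.2.1, t))) p.2.2
      = fderiv ℝ q p (((0:ℝ), 0), (0, 1)) := by
  have hpath : HasDerivAt (fun t : ℝ => ((p.1, (p.2.1, t)) : EE))
      (((0:ℝ), (0:ℝ)), ((0:ℝ), (1:ℝ))) p.2.2 :=
    HasDerivAt.prodMk (HasDerivAt.prodMk (hasDerivAt_const _ _) (hasDerivAt_const _ _))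
      (HasDerivAt.prodMk (hasDerivAt_const _ _) (hasDerivAt_id _))
  have h0 : ((p.1, (p.2.1, p.2.2)) : EE) = p := by simp
  have := ((hq _).hasFDerivAt.comp_hasDerivAt p.2.2 hpath)
  rw [h0] at this
  exact this.deriv

end Slices

lemma clm_expand1 (L : EE →L[ℝ] ℝ) (a b : ℝ) :
    L ((a, 0), (b, 0)) = a * L ((1, 0), (0, 0)) + b * L ((0, 0), (1, 0)) := by
  have h : ((a, (0:ℝ)), (b, (0:ℝ)))
      = a • (((1:ℝ), (0:ℝ)), ((0:ℝ), (0:ℝ))) + b • (((0:ℝ), (0:ℝ)), ((1:ℝ), (0:ℝ))) := by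
    simp [Prod.ext_iff]
  rw [h, map_add, map_smul, map_smul, smul_eq_mul, smul_eq_mul]

lemma clm_expand2 (L : EE →L[ℝ] ℝ) (a b : ℝ) :
    L ((0, a), (0, b)) = a * L ((0, 1), (0, 0)) + b * L ((0, 0), (0, 1)) := by
  have h : (((0:ℝ), a), ((0:ℝ), b))
      = a • (((0:ℝ), (1:ℝ)), ((0:ℝ), (0:ℝ))) + b • (((0:ℝ), (0:ℝ)), ((0:ℝ), (1:ℝ))) := by
    simp [Prod.ext_iff]
  rw [h, map_add, map_smul, map_smul, smul_eq_mul, smul_eq_mul]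

lemma pb_antisym (q₁ q₂ : EE → ℝ) (h₁ : Differentiable ℝ q₁) (h₂ : Differentiable ℝ q₂)
    (s : ℝ) (ρ : EE) :
    poissonBracket (fun y => q₁ (oscFlow s y)) q₂ ρ
      = -(poissonBracket (fun y => q₂ (oscFlow (-s) y)) q₁ (oscFlow s ρ)) := by
  simp only [poissonBracket]
  rw [sliceA q₁ h₁ s ρ, sliceB q₁ h₁ s ρ, sliceC q₁ h₁ s ρ, sliceD q₁ h₁ s ρ,
    plainA q₂ h₂ ρ, plainB q₂ h₂ ρ, plainC q₂ h₂ ρ, plainD q₂ h₂ ρ,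
    sliceA q₂ h₂ (-s) (oscFlow s ρ), sliceB q₂ h₂ (-s) (oscFlow s ρ),
    sliceC q₂ h₂ (-s) (oscFlow s ρ), sliceD q₂ h₂ (-s) (oscFlow s ρ),
    plainA q₁ h₁ (oscFlow s ρ), plainB q₁ h₁ (oscFlow s ρ),
    plainC q₁ h₁ (oscFlow s ρ), plainD q₁ h₁ (oscFlow s ρ)]
  rw [oscFlow_inv, Real.cos_neg, Real.sin_neg, neg_neg]
  rw [clm_expand1 (fderiv ℝ q₁ (oscFlow s ρ)) (Real.cos s) (-Real.sin s),
    clm_expand1 (fderiv ℝ q₁ (oscFlow s ρ)) (Real.sin s) (Real.cos s),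
    clm_expand2 (fderiv ℝ q₁ (oscFlow s ρ)) (Real.cos s) (-Real.sin s),
    clm_expand2 (fderiv ℝ q₁ (oscFlow s ρ)) (Real.sin s) (Real.cos s),
    clm_expand1 (fderiv ℝ q₂ ρ) (Real.cos s) (Real.sin s),
    clm_expand1 (fderiv ℝ q₂ ρ) (-Real.sin s) (Real.cos s),
    clm_expand2 (fderiv ℝ q₂ ρ) (Real.cos s) (Real.sin s),
    clm_expand2 (fderiv ℝ q₂ ρ) (-Real.sin s) (Real.cos s)]
  ring

lemma corFn_sub_period (q₁ q₂ : EE → ℝ) (s : ℝ) (p : EE) :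
    corFn q₁ q₂ (s - 2 * Real.pi) p = corFn q₁ q₂ s p := by
  simp only [corFn, oscFlow_sub_period]

lemma corFn_antisym (q₁ q₂ : EE → ℝ) (h₁ : Differentiable ℝ q₁) (h₂ : Differentiable ℝ q₂)
    (s : ℝ) (p : EE) :
    corFn q₁ q₂ s p = -corFn q₂ q₁ (-s) p := by
  simp only [corFn, flowAvg]
  have hH : Function.Periodic
      (fun t => poissonBracket (fun ρ => q₂ (oscFlow (-s) ρ)) q₁ (oscFlow t p))
      (2 * Real.pi) := by
    intro t
    simp only [oscFlow_period]
  have key : (∫ t in (0:ℝ)..(2 * Real.pi),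
        poissonBracket (fun ρ => q₁ (oscFlow s ρ)) q₂ (oscFlow t p))
      = -∫ t in (0:ℝ)..(2 * Real.pi),
        poissonBracket (fun ρ => q₂ (oscFlow (-s) ρ)) q₁ (oscFlow t p) := by
    calc (∫ t in (0:ℝ)..(2 * Real.pi),
          poissonBracket (fun ρ => q₁ (oscFlow s ρ)) q₂ (oscFlow t p))
        = ∫ t in (0:ℝ)..(2 * Real.pi),
            -(poissonBracket (fun ρ => q₂ (oscFlow (-s) ρ)) q₁ (oscFlow (s + t) p)) := by
          refine intervalIntegral.integral_congr fun t _ => ?_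
          rw [pb_antisym q₁ q₂ h₁ h₂ s (oscFlow t p), oscFlow_comp]
      _ = -∫ t in (0:ℝ)..(2 * Real.pi),
            poissonBracket (fun ρ => q₂ (oscFlow (-s) ρ)) q₁ (oscFlow (s + t) p) :=
          intervalIntegral.integral_neg
      _ = -∫ t in (s + 0)..(s + 2 * Real.pi),
            poissonBracket (fun ρ => q₂ (oscFlow (-s) ρ)) q₁ (oscFlow t p) := by
          rw [intervalIntegral.integral_comp_add_left
            (fun t => poissonBracket (fun ρ => q₂ (oscFlow (-s) ρ)) q₁ (oscFlow t p)) s]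
      _ = -∫ t in (0:ℝ)..(2 * Real.pi),
            poissonBracket (fun ρ => q₂ (oscFlow (-s) ρ)) q₁ (oscFlow t p) := by
          rw [add_zero]
          rw [show (2 * Real.pi : ℝ) = 0 + 2 * Real.pi by ring, ← add_assoc, add_zero]
          rw [hH.intervalIntegral_add_eq s 0]
  rw [key]
  ring

/-- For `q₁, q₂` continuously differentiable, the quantity
`C(q₁, q₂)(ρ) = (1/(2π)) ∫₀^{2π} (s − π) Cor(q₁, q₂; s)(ρ) ds` is symmetric:
`C(q₁, q₂) = C(q₂, q₁)` pointwise. -/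
theorem stmt_19 (q₁ q₂ : (ℝ × ℝ) × (ℝ × ℝ) → ℝ)
    (h₁ : ContDiff ℝ 1 q₁) (h₂ : ContDiff ℝ 1 q₂) (p : (ℝ × ℝ) × (ℝ × ℝ)) :
    (1 / (2 * Real.pi)) * ∫ s in (0:ℝ)..(2 * Real.pi), (s - Real.pi) * corFn q₁ q₂ s p
      = (1 / (2 * Real.pi)) * ∫ s in (0:ℝ)..(2 * Real.pi), (s - Real.pi) * corFn q₂ q₁ s p := by
  have d₁ := h₁.differentiable one_ne_zero
  have d₂ := h₂.differentiable one_ne_zero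
  have step1 : (∫ s in (0:ℝ)..(2 * Real.pi), (s - Real.pi) * corFn q₁ q₂ s p)
      = -∫ s in (0:ℝ)..(2 * Real.pi), (s - Real.pi) * corFn q₂ q₁ (-s) p := by
    rw [← intervalIntegral.integral_neg]
    refine intervalIntegral.integral_congr fun s _ => ?_
    rw [corFn_antisym q₁ q₂ d₁ d₂ s p]
    ring
  rw [step1]
  have step2 : (∫ s in (0:ℝ)..(2 * Real.pi), (s - Real.pi) * corFn q₂ q₁ (-s) p)
      = ∫ u in (-(2 * Real.pi))..(-(0:ℝ)), (-u - Real.pi) * corFn q₂ q₁ u p := by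
    rw [← intervalIntegral.integral_comp_neg (fun u => (-u - Real.pi) * corFn q₂ q₁ u p)]
    refine intervalIntegral.integral_congr fun s _ => ?_
    ring_nf
  rw [step2]
  have step3 : (∫ u in (-(2 * Real.pi))..(-(0:ℝ)), (-u - Real.pi) * corFn q₂ q₁ u p)
      = ∫ v in (0:ℝ)..(2 * Real.pi), (-(v - 2 * Real.pi) - Real.pi) * corFn q₂ q₁ (v - 2 * Real.pi) p := by
    rw [intervalIntegral.integral_comp_sub_right
      (fun u => (-u - Real.pi) * corFn q₂ q₁ u p) (2 * Real.pi)]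
    norm_num
  rw [step3]
  have step4 : (∫ v in (0:ℝ)..(2 * Real.pi), (-(v - 2 * Real.pi) - Real.pi) * corFn q₂ q₁ (v - 2 * Real.pi) p)
      = ∫ v in (0:ℝ)..(2 * Real.pi), -((v - Real.pi) * corFn q₂ q₁ v p) := by
    refine intervalIntegral.integral_congr fun v _ => ?_
    rw [corFn_sub_period]
    ring
  rw [step4, intervalIntegral.integral_neg, neg_neg]
end
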